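/- arXiv:2102.00323 — 4 statements merged into one kernel-verified Lean document; each statement's English description precedes it below -/
import Mathlib

section
/- For every integer r ≥ 3, the limit as n → ∞ of ex(n, P_3, K_{r+1}) / C(n,4) exists and equals 12·((r−1)/r)^3. Equivalently, the maximum over all K_{r+1}-free graphs G on n vertices of the P_3-density d(P_3,G) tends to 12·((r−1)/r)^3 as n → ∞. -/
open SimpleGraph

/-- The number of (not necessarily induced) subgraphs of `G` isomorphic to `T`. -/
noncomputable def subgraphCount {α β : Type*} (T : SimpleGraph α) (G : SimpleGraph β) : ℕ :=
  Nat.card {H : G.Subgraph // Nonempty (T ≃g H.coe)}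

/-- `G` is `F`-free: it contains no subgraph isomorphic to `F`. -/
def IsFFree {α β : Type*} (F : SimpleGraph α) (G : SimpleGraph β) : Prop :=
  ∀ H : G.Subgraph, IsEmpty (F ≃g H.coe)

/-- The generalized Turán number `ex(n, T, F)`. -/
noncomputable def genTuran (n : ℕ) {α γ : Type*} (T : SimpleGraph α) (F : SimpleGraph γ) : ℕ :=
  sSup {k | ∃ G : SimpleGraph (Fin n), IsFFree F G ∧ subgraphCount T G = k}

/-- The path with three edges on four vertices. -/
noncomputable def P3 : SimpleGraph (Fin 4) := pathGraph 4

/-!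
Ordered copies of `P3` in `G` are the injective walks `a b c d`, and there are `2 ν(P3, G)` of
them. All walks of length three number `∑_{u ~ v} d(u) d(v) = dᵀ A d` for the degree vector
`d = A 1`, and at most `3 n³` of them repeat a vertex. If `G` is `K_{r+1}`-free, the
Motzkin–Straus inequality `xᵀ A x ≤ (1 - 1/r) (∑ x)²` (for `x ≥ 0`), applied to `d` and to `1`,
gives `dᵀ A d ≤ (1 - 1/r)³ n⁴`. Conversely the Turán graph has minimum degree at least
`(1 - 1/r) n - 1`, hence at least `n ((1 - 1/r) n - 1)³` walks. So `ex(n, P3, K_{r+1}) / n⁴`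
tends to `(1 - 1/r)³ / 2`, while `C(n, 4) ~ n⁴ / 24`.
-/

open Finset Matrix Filter Topology Asymptotics

lemma sq_sum_le_card_support_mul_sum_sq {V : Type*} [Fintype V] (x : V → ℝ) :
    (∑ v, x v) ^ 2 ≤ (#{v | x v ≠ 0} : ℕ) * ∑ v, x v ^ 2 := by
  classical
  calc (∑ v, x v) ^ 2 = (∑ v with x v ≠ 0, x v) ^ 2 := by rw [sum_filter_ne_zero]
    _ ≤ (#{v | x v ≠ 0} : ℕ) * ∑ v with x v ≠ 0, x v ^ 2 := sq_sum_le_card_mul_sum_sq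
    _ ≤ (#{v | x v ≠ 0} : ℕ) * ∑ v, x v ^ 2 := by
      gcongr
      exact subset_univ _

lemma Fin.card_filter_val_mod_eq_le (n r k : ℕ) :
    #{u : Fin n | (u : ℕ) % r = k} ≤ n / r + 1 := by
  calc #{u : Fin n | (u : ℕ) % r = k} ≤ #(range (n / r + 1)) := by
        refine card_le_card_of_injOn (fun u => (u : ℕ) / r) (fun u _ => ?_) fun u hu w hw h => ?_
        · simpa [Nat.lt_succ_iff] using Nat.div_le_div_right u.isLt.le
        · simp only [coe_filter, mem_univ, true_and, Set.mem_ofPred_eq] at hu hw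
          rw [Fin.ext_iff, ← Nat.div_add_mod u r, ← Nat.div_add_mod w r, hu, hw]
          simp_all
    _ = n / r + 1 := card_range _

namespace SimpleGraph

variable {V W : Type*} {G : SimpleGraph V}

section Copies

variable {H : SimpleGraph W}

lemma isFFree_iff_free : IsFFree H G ↔ H.Free G := by
  simp [IsFFree, Free, isContained_iff_exists_iso_subgraph]

lemma isFFree_top_iff_cliqueFree {r : ℕ} :
    IsFFree (⊤ : SimpleGraph (Fin r)) G ↔ G.CliqueFree r := by
  simpa [isFFree_iff_free] using (cliqueFree_iff_top_free (G := G) (β := Fin r)).symm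

lemma Subgraph.coeCopy_apply (S : G.Subgraph) (v : S.verts) : S.coeCopy v = v := rfl

lemma Copy.coe_isoToSubgraph_apply (c : Copy H G) (a : W) : (c.isoToSubgraph a : V) = c a := rfl

lemma Subgraph.toSubgraph_coeCopy_comp (S : G.Subgraph) (e : H ≃g S.coe) :
    (S.coeCopy.comp e.toCopy).toSubgraph = S := by
  show Subgraph.map (S.hom.comp e.toHom) ⊤ = S
  simp [Subgraph.map_comp]

/-- A copy of `H` is a subgraph isomorphic to `H` together with one of its `|Aut H|`
identifications with `H`. -/
theorem natCard_copy_eq_subgraphCount_mul :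
    Nat.card (Copy H G) = subgraphCount H G * Nat.card (H ≃g H) := by
  let f : {S : G.Subgraph // Nonempty (H ≃g S.coe)} × (H ≃g H) → Copy H G := fun p =>
    p.1.1.coeCopy.comp (p.1.2.some.comp p.2).toCopy
  have hf : Function.Bijective f := by
    constructor
    · rintro ⟨⟨S, hS⟩, σ⟩ ⟨⟨S', hS'⟩, σ'⟩ h
      obtain rfl : S = S' := by
        simpa only [f, Subgraph.toSubgraph_coeCopy_comp] using congrArg Copy.toSubgraph h
      obtain rfl : σ = σ' := by
        ext a
        simpa [f, Subgraph.coeCopy_apply, Subtype.val_inj] using congrArg (· a) h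
      rfl
    · intro c
      have he : Nonempty (H ≃g c.toSubgraph.coe) := ⟨c.isoToSubgraph⟩
      refine ⟨⟨⟨c.toSubgraph, he⟩, he.some.symm.comp c.isoToSubgraph⟩, ?_⟩
      ext a
      simp [f, Subgraph.coeCopy_apply, Copy.coe_isoToSubgraph_apply]
  rw [← Nat.card_congr (Equiv.ofBijective f hf), Nat.card_prod, subgraphCount]

end Copies

lemma P3_adj {i j : Fin 4} : P3.Adj i j ↔ i.val + 1 = j.val ∨ j.val + 1 = i.val := pathGraph_adj

lemma natCard_iso_P3 : Nat.card (P3 ≃g P3) = 2 := by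
  let e : (P3 ≃g P3) ≃ {σ : Equiv.Perm (Fin 4) // ∀ i j,
      (σ i).val + 1 = σ j ∨ (σ j).val + 1 = σ i ↔ i.val + 1 = j ∨ j.val + 1 = i} :=
    { toFun σ := ⟨σ.toEquiv, fun i j => by
        simpa only [P3_adj] using σ.map_rel_iff' (a := i) (b := j)⟩
      invFun σ := ⟨σ.1, fun {i j} => by simpa only [P3_adj] using σ.2 i j⟩
      left_inv _ := rfl
      right_inv _ := rfl }
  rw [Nat.card_congr e, Nat.card_eq_fintype_card]
  decide

lemma adj_vecCons_of_P3_adj {a b c d : V} (hab : G.Adj a b) (hbc : G.Adj b c) (hcd : G.Adj c d)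
    {i j : Fin 4} (h : P3.Adj i j) : G.Adj (![a, b, c, d] i) (![a, b, c, d] j) := by
  rw [P3_adj] at h
  fin_cases i <;> fin_cases j <;> simp at h ⊢ <;>
    first | assumption | exact (‹G.Adj _ _› : G.Adj _ _).symm

lemma injective_vecCons_of_adj {a b c d : V} (hab : G.Adj a b) (hbc : G.Adj b c)
    (hcd : G.Adj c d) (hac : a ≠ c) (had : a ≠ d) (hbd : b ≠ d) :
    Function.Injective ![a, b, c, d] := by
  intro i j h
  fin_cases i <;> fin_cases j <;> simp at h ⊢ <;> simp_all [eq_comm]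

lemma CliqueFree.card_le_of_isClique {r : ℕ} (hG : G.CliqueFree (r + 1)) {s : Finset V}
    (hs : G.IsClique (s : Set V)) : #s ≤ r := by
  by_contra! h
  obtain ⟨t, hts, ht⟩ := exists_subset_card_eq (Nat.succ_le_of_lt h)
  exact hG t ⟨hs.subset (coe_subset.2 hts), ht⟩

section MotzkinStraus

def moveWeight [DecidableEq V] (x : V → ℝ) (i j : V) : V → ℝ :=
  x + x i • (Pi.single j 1 - Pi.single i 1)

section moveWeight

variable [DecidableEq V] {x : V → ℝ} {i j : V}

lemma moveWeight_apply_of_ne {v : V} (hi : v ≠ i) (hj : v ≠ j) : moveWeight x i j v = x v := by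
  simp [moveWeight, hi, hj]

lemma moveWeight_apply_left (hij : i ≠ j) : moveWeight x i j i = 0 := by
  simp [moveWeight, hij]

lemma moveWeight_apply_right (hij : i ≠ j) : moveWeight x i j j = x j + x i := by
  simp [moveWeight, hij.symm]

lemma moveWeight_nonneg (hx : 0 ≤ x) (hij : i ≠ j) : 0 ≤ moveWeight x i j := by
  intro v
  by_cases hi : v = i
  · subst hi
    simp [moveWeight_apply_left hij]
  by_cases hj : v = j
  · subst hj
    rw [moveWeight_apply_right hij]
    exact add_nonneg (hx v) (hx i)
  · rw [moveWeight_apply_of_ne hi hj]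
    exact hx v

variable [Fintype V]

lemma sum_moveWeight (x : V → ℝ) (i j : V) : ∑ v, moveWeight x i j v = ∑ v, x v := by
  simp [moveWeight, sum_add_distrib, mul_sub, sum_sub_distrib, ← mul_sum]

lemma card_support_moveWeight_lt (hij : i ≠ j) (hi : x i ≠ 0) (hj : x j ≠ 0) :
    #{v | moveWeight x i j v ≠ 0} < #{v | x v ≠ 0} := by
  refine card_lt_card ⟨fun v hv => ?_, fun h => ?_⟩
  · simp only [mem_filter, mem_univ, true_and] at hv ⊢
    by_cases hvi : v = i
    · exact hvi ▸ hi
    by_cases hvj : v = j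
    · exact hvj ▸ hj
    · rwa [moveWeight_apply_of_ne hvi hvj] at hv
  · exact absurd (moveWeight_apply_left hij) (by simpa using h (by simpa using hi))

end moveWeight

variable [Fintype V] [DecidableRel G.Adj]

lemma dotProduct_adjMatrix_mulVec_comm (x y : V → ℝ) :
    x ⬝ᵥ G.adjMatrix ℝ *ᵥ y = y ⬝ᵥ G.adjMatrix ℝ *ᵥ x := by
  rw [dotProduct_mulVec, ← mulVec_transpose, transpose_adjMatrix, dotProduct_comm]

lemma dotProduct_adjMatrix_mulVec_le_sq_sum_sub {x : V → ℝ} (hx : 0 ≤ x) :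
    x ⬝ᵥ G.adjMatrix ℝ *ᵥ x ≤ (∑ v, x v) ^ 2 - ∑ v, x v ^ 2 := by
  classical
  have key (u v : V) :
      (if G.Adj u v then x u * x v else 0) ≤ x u * x v - if u = v then x u * x v else 0 := by
    by_cases huv : u = v
    · simp [huv]
    · simp only [huv, if_false, sub_zero]
      split_ifs
      exacts [le_rfl, mul_nonneg (hx u) (hx v)]
  calc x ⬝ᵥ G.adjMatrix ℝ *ᵥ x = ∑ u, ∑ v, if G.Adj u v then x u * x v else 0 :=
        dotProduct_mulVec_adjMatrix x x
    _ ≤ ∑ u, ∑ v, (x u * x v - if u = v then x u * x v else 0) := by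
        gcongr with u _ v _
        exact key u v
    _ = (∑ v, x v) ^ 2 - ∑ v, x v ^ 2 := by simp [sum_sub_distrib, sum_mul_sum, sq]

lemma dotProduct_adjMatrix_mulVec_mono {x y : V → ℝ} (hx : 0 ≤ x) (hxy : x ≤ y) :
    x ⬝ᵥ G.adjMatrix ℝ *ᵥ x ≤ y ⬝ᵥ G.adjMatrix ℝ *ᵥ y := by
  simp only [dotProduct_mulVec_adjMatrix]
  gcongr with u _ v _
  split_ifs
  exacts [mul_le_mul (hxy u) (hxy v) (hx v) ((hx u).trans (hxy u)), le_rfl]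

lemma dotProduct_adjMatrix_mulVec_moveWeight [DecidableEq V] (x : V → ℝ) {i j : V}
    (hij : ¬G.Adj i j) :
    moveWeight x i j ⬝ᵥ G.adjMatrix ℝ *ᵥ moveWeight x i j =
      x ⬝ᵥ G.adjMatrix ℝ *ᵥ x + 2 * x i * ((G.adjMatrix ℝ *ᵥ x) j - (G.adjMatrix ℝ *ᵥ x) i) := by
  set δ : V → ℝ := x i • (Pi.single j 1 - Pi.single i 1)
  have hji : ¬G.Adj j i := fun h => hij h.symm
  have hexpand : moveWeight x i j ⬝ᵥ G.adjMatrix ℝ *ᵥ moveWeight x i j =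
      x ⬝ᵥ G.adjMatrix ℝ *ᵥ x + 2 * (δ ⬝ᵥ G.adjMatrix ℝ *ᵥ x) + δ ⬝ᵥ G.adjMatrix ℝ *ᵥ δ := by
    simp only [moveWeight, mulVec_add, add_dotProduct, dotProduct_add]
    rw [dotProduct_adjMatrix_mulVec_comm x δ]
    ring
  have hcross : δ ⬝ᵥ G.adjMatrix ℝ *ᵥ x =
      x i * ((G.adjMatrix ℝ *ᵥ x) j - (G.adjMatrix ℝ *ᵥ x) i) := by
    simp only [δ, smul_dotProduct, sub_dotProduct, single_one_dotProduct, smul_eq_mul]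
  have hsquare : δ ⬝ᵥ G.adjMatrix ℝ *ᵥ δ = 0 := by
    simp [δ, mulVec_sub, mulVec_smul, hij, hji]
  rw [hexpand, hcross, hsquare]
  ring

/-- **Motzkin–Straus**. Moving the weight of `i` onto a non-neighbour `j` with
`(A x)ᵢ ≤ (A x)ⱼ` does not decrease the form and shrinks the support; once the support is a
clique it has at most `r` vertices, and Cauchy–Schwarz finishes. -/
theorem CliqueFree.dotProduct_adjMatrix_mulVec_le {r : ℕ} (hG : G.CliqueFree (r + 1))
    {x : V → ℝ} (hx : 0 ≤ x) : x ⬝ᵥ G.adjMatrix ℝ *ᵥ x ≤ (1 - 1 / r) * (∑ v, x v) ^ 2 := by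
  classical
  induction hk : #{v | x v ≠ 0} using Nat.strong_induction_on generalizing x with
  | _ k ih =>
  by_cases hclique : G.IsClique ({v | x v ≠ 0} : Finset V)
  · have hS : (∑ v, x v) ^ 2 / r ≤ ∑ v, x v ^ 2 := by
      refine div_le_of_le_mul₀ (Nat.cast_nonneg r) (sum_nonneg fun v _ => sq_nonneg (x v)) ?_
      calc (∑ v, x v) ^ 2 ≤ (#{v | x v ≠ 0} : ℕ) * ∑ v, x v ^ 2 :=
            sq_sum_le_card_support_mul_sum_sq x
        _ ≤ r * ∑ v, x v ^ 2 := by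
          gcongr ?_ * _
          exact_mod_cast hG.card_le_of_isClique hclique
        _ = _ := mul_comm _ _
    have := dotProduct_adjMatrix_mulVec_le_sq_sum_sub (G := G) hx
    linarith [show (1 - 1 / (r : ℝ)) * (∑ v, x v) ^ 2 = (∑ v, x v) ^ 2 - (∑ v, x v) ^ 2 / r by ring]
  · obtain ⟨i, hi, j, hj, hij, hadj⟩ : ∃ i, x i ≠ 0 ∧ ∃ j, x j ≠ 0 ∧ i ≠ j ∧ ¬G.Adj i j := by
      simpa [IsClique, Set.Pairwise] using hclique
    wlog hle : (G.adjMatrix ℝ *ᵥ x) i ≤ (G.adjMatrix ℝ *ᵥ x) j generalizing i j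
    · exact this j hj i hi hij.symm (fun h => hadj h.symm) (not_le.1 hle).le
    calc x ⬝ᵥ G.adjMatrix ℝ *ᵥ x ≤ moveWeight x i j ⬝ᵥ G.adjMatrix ℝ *ᵥ moveWeight x i j := by
          rw [dotProduct_adjMatrix_mulVec_moveWeight x hadj]
          nlinarith [mul_nonneg (hx i) (sub_nonneg.2 hle)]
      _ ≤ (1 - 1 / r) * (∑ v, moveWeight x i j v) ^ 2 :=
          ih _ (hk ▸ card_support_moveWeight_lt hij hi hj) (moveWeight_nonneg hx hij) rfl
      _ = (1 - 1 / r) * (∑ v, x v) ^ 2 := by rw [sum_moveWeight]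

end MotzkinStraus

section Walks

variable [Fintype V] [DecidableRel G.Adj]

variable (G) in
def walkTuples : Finset (V × V × V × V) :=
  {t | G.Adj t.1 t.2.1 ∧ G.Adj t.2.1 t.2.2.1 ∧ G.Adj t.2.2.1 t.2.2.2}

variable (G) in
def pathTuples [DecidableEq V] : Finset (V × V × V × V) :=
  {t ∈ walkTuples G | t.1 ≠ t.2.2.1 ∧ t.1 ≠ t.2.2.2 ∧ t.2.1 ≠ t.2.2.2}

@[simp] lemma mem_walkTuples {a b c d : V} :
    (a, b, c, d) ∈ walkTuples G ↔ G.Adj a b ∧ G.Adj b c ∧ G.Adj c d := by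
  simp [walkTuples]

@[simp] lemma mem_pathTuples [DecidableEq V] {a b c d : V} :
    (a, b, c, d) ∈ pathTuples G ↔ (a, b, c, d) ∈ walkTuples G ∧ a ≠ c ∧ a ≠ d ∧ b ≠ d := by
  simp [pathTuples]

lemma card_walkTuples :
    (#(walkTuples G) : ℝ) = G.adjMatrix ℝ *ᵥ 1 ⬝ᵥ G.adjMatrix ℝ *ᵥ (G.adjMatrix ℝ *ᵥ 1) := by
  have hsum : (#(walkTuples G) : ℝ) = ∑ a, ∑ b, ∑ c, ∑ d,
      G.adjMatrix ℝ a b * G.adjMatrix ℝ b c * G.adjMatrix ℝ c d := by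
    simp only [walkTuples, natCast_card_filter, Fintype.sum_prod_type, adjMatrix_apply]
    refine sum_congr rfl fun a _ => sum_congr rfl fun b _ => sum_congr rfl fun c _ =>
      sum_congr rfl fun d _ => ?_
    by_cases hab : G.Adj a b <;> by_cases hbc : G.Adj b c <;> by_cases hcd : G.Adj c d <;> simp [*]
  rw [hsum, ← dotProduct_comm, dotProduct_adjMatrix_mulVec_comm _ 1]
  simp only [dotProduct, mulVec, Pi.one_apply, one_mul, mul_one, mul_sum, mul_assoc]

lemma card_walkTuples_le_card_pathTuples_add [DecidableEq V] :
    #(walkTuples G) ≤ #(pathTuples G) + 3 * Fintype.card V ^ 3 := by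
  have hcover : {t ∈ walkTuples G | ¬(t.1 ≠ t.2.2.1 ∧ t.1 ≠ t.2.2.2 ∧ t.2.1 ≠ t.2.2.2)} ⊆
      (univ.image fun (b, c, d) => (c, b, c, d)) ∪ (univ.image fun (b, c, d) => (d, b, c, d)) ∪
        (univ.image fun (a, b, c) => (a, b, c, b)) := by
    rintro ⟨a, b, c, d⟩ ht
    simp only [mem_filter, not_and_or, not_not] at ht
    rcases ht.2 with rfl | rfl | rfl <;> simp
  calc #(walkTuples G) = #(pathTuples G) +
        #{t ∈ walkTuples G | ¬(t.1 ≠ t.2.2.1 ∧ t.1 ≠ t.2.2.2 ∧ t.2.1 ≠ t.2.2.2)} :=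
        (card_filter_add_card_filter_not _).symm
    _ ≤ #(pathTuples G) + (#(univ : Finset (V × V × V)) + #(univ : Finset (V × V × V)) +
        #(univ : Finset (V × V × V))) := by
      grw [hcover, card_union_le, card_union_le, card_image_le, card_image_le, card_image_le]
    _ = #(pathTuples G) + 3 * Fintype.card V ^ 3 := by
      simp only [card_univ, Fintype.card_prod]
      ring

noncomputable def copyP3EquivPathTuples [DecidableEq V] : Copy P3 G ≃ pathTuples G where
  toFun f := ⟨(f 0, f 1, f 2, f 3), by
    have hadj (i j : Fin 4) (h : i.val + 1 = j.val) : G.Adj (f i) (f j) :=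
      f.toHom.map_adj (P3_adj.2 (.inl h))
    have hne (i j : Fin 4) (h : i ≠ j) : f i ≠ f j := f.injective.ne h
    simp only [mem_pathTuples, mem_walkTuples]
    exact ⟨⟨hadj 0 1 rfl, hadj 1 2 rfl, hadj 2 3 rfl⟩,
      hne 0 2 (by decide), hne 0 3 (by decide), hne 1 3 (by decide)⟩⟩
  invFun t :=
    have h := mem_pathTuples.1 t.2
    have hw := mem_walkTuples.1 h.1
    ⟨⟨![t.1.1, t.1.2.1, t.1.2.2.1, t.1.2.2.2], adj_vecCons_of_P3_adj hw.1 hw.2.1 hw.2.2⟩,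
      injective_vecCons_of_adj hw.1 hw.2.1 hw.2.2 h.2.1 h.2.2.1 h.2.2.2⟩
  left_inv f := by
    ext i
    fin_cases i <;> rfl
  right_inv _ := rfl

lemma card_pathTuples [DecidableEq V] : #(pathTuples G) = 2 * subgraphCount P3 G := by
  rw [← Fintype.card_coe, ← Nat.card_eq_fintype_card, ← Nat.card_congr copyP3EquivPathTuples,
    natCard_copy_eq_subgraphCount_mul, natCard_iso_P3, mul_comm]

theorem CliqueFree.card_walkTuples_le {r : ℕ} (hG : G.CliqueFree (r + 1)) :
    (#(walkTuples G) : ℝ) ≤ (1 - 1 / r) ^ 3 * Fintype.card V ^ 4 := by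
  have hK : (0 : ℝ) ≤ 1 - 1 / r := by
    rcases r.eq_zero_or_pos with rfl | hr
    · simp
    · rw [sub_nonneg, div_le_one (by positivity)]
      exact_mod_cast hr
  have hdeg : 0 ≤ G.adjMatrix ℝ *ᵥ 1 := fun v => by simp
  have hedges : ∑ v, (G.adjMatrix ℝ *ᵥ 1) v ≤ (1 - 1 / r) * Fintype.card V ^ 2 := by
    simpa [dotProduct, mul_comm] using hG.dotProduct_adjMatrix_mulVec_le (x := 1) zero_le_one
  calc (#(walkTuples G) : ℝ) ≤ (1 - 1 / r) * (∑ v, (G.adjMatrix ℝ *ᵥ 1) v) ^ 2 := by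
        rw [card_walkTuples]
        exact hG.dotProduct_adjMatrix_mulVec_le hdeg
    _ ≤ (1 - 1 / r) * ((1 - 1 / r) * Fintype.card V ^ 2) ^ 2 := by
        gcongr
        exact sum_nonneg fun v _ => hdeg v
    _ = (1 - 1 / r) ^ 3 * Fintype.card V ^ 4 := by ring

lemma le_card_walkTuples_of_le_degree {δ : ℝ} (hδ : 0 ≤ δ) (h : ∀ v, δ ≤ G.degree v) :
    Fintype.card V * δ ^ 3 ≤ #(walkTuples G) := by
  have hδd : δ • 1 ≤ G.adjMatrix ℝ *ᵥ 1 := fun v => by simpa using h v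
  calc Fintype.card V * δ ^ 3 = δ ^ 2 * ∑ _v : V, δ := by
        simp only [sum_const, card_univ, nsmul_eq_mul]
        ring
    _ ≤ δ ^ 2 * ∑ v, (G.adjMatrix ℝ *ᵥ 1) v := by
        gcongr with v
        simpa using hδd v
    _ = (δ • 1 : V → ℝ) ⬝ᵥ G.adjMatrix ℝ *ᵥ (δ • 1) := by
        simp only [dotProduct, Pi.smul_apply, smul_eq_mul, adjMatrix_mulVec_apply, Pi.one_apply,
          mul_one, mul_sum]
        ring_nf
    _ ≤ G.adjMatrix ℝ *ᵥ 1 ⬝ᵥ G.adjMatrix ℝ *ᵥ (G.adjMatrix ℝ *ᵥ 1) :=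
        dotProduct_adjMatrix_mulVec_mono (smul_nonneg hδ zero_le_one) hδd
    _ = #(walkTuples G) := card_walkTuples.symm

end Walks

lemma le_degree_turanGraph (n r : ℕ) (v : Fin n) :
    n ≤ (turanGraph n r).degree v + (n / r + 1) := by
  have hsplit := card_filter_add_card_filter_not (s := univ) fun u => (turanGraph n r).Adj v u
  have hclass : #{u | ¬(turanGraph n r).Adj v u} ≤ n / r + 1 := by
    simpa only [turanGraph_adj, not_not, eq_comm] using Fin.card_filter_val_mod_eq_le n r (v % r)
  rw [card_univ, Fintype.card_fin] at hsplit
  rw [← card_neighborFinset_eq_degree, neighborFinset_eq_filter]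
  omega

section GenTuran

variable {n : ℕ} {α γ : Type*} {T : SimpleGraph α} {F : SimpleGraph γ}

lemma finite_setOf_subgraphCount_of_isFFree :
    {k | ∃ G : SimpleGraph (Fin n), IsFFree F G ∧ subgraphCount T G = k}.Finite :=
  (Set.finite_range (subgraphCount T : SimpleGraph (Fin n) → ℕ)).subset
    (by rintro _ ⟨G, -, rfl⟩; exact Set.mem_range_self G)

lemma subgraphCount_le_genTuran {G : SimpleGraph (Fin n)} (hG : IsFFree F G) :
    subgraphCount T G ≤ genTuran n T F :=
  le_csSup finite_setOf_subgraphCount_of_isFFree.bddAbove ⟨G, hG, rfl⟩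

lemma exists_subgraphCount_eq_genTuran {G₀ : SimpleGraph (Fin n)} (h₀ : IsFFree F G₀) :
    ∃ G : SimpleGraph (Fin n), IsFFree F G ∧ subgraphCount T G = genTuran n T F := by
  have hne : {k | ∃ G : SimpleGraph (Fin n), IsFFree F G ∧ subgraphCount T G = k}.Nonempty :=
    ⟨_, G₀, h₀, rfl⟩
  exact Nat.sSup_mem hne finite_setOf_subgraphCount_of_isFFree.bddAbove

theorem two_mul_genTuran_P3_le {r : ℕ} (hr : 0 < r) (n : ℕ) :
    2 * (genTuran n P3 (⊤ : SimpleGraph (Fin (r + 1))) : ℝ) ≤ (1 - 1 / r) ^ 3 * n ^ 4 := by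
  classical
  obtain ⟨G, hG, hcount⟩ := exists_subgraphCount_eq_genTuran (T := P3)
    (isFFree_top_iff_cliqueFree.2 (turanGraph_cliqueFree (n := n) hr))
  calc 2 * (genTuran n P3 (⊤ : SimpleGraph (Fin (r + 1))) : ℝ) = #(pathTuples G) := by
        rw [card_pathTuples, ← hcount]
        push_cast
        ring
    _ ≤ #(walkTuples G) := by exact_mod_cast card_le_card (filter_subset _ _)
    _ ≤ (1 - 1 / r) ^ 3 * n ^ 4 := by
        simpa using (isFFree_top_iff_cliqueFree.1 hG).card_walkTuples_le

theorem le_two_mul_genTuran_P3 {r : ℕ} (hr : 0 < r) {n : ℕ}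
    (hn : 0 ≤ (n : ℝ) * (1 - 1 / r) - 1) :
    n * ((n : ℝ) * (1 - 1 / r) - 1) ^ 3 - 3 * n ^ 3 ≤
      2 * (genTuran n P3 (⊤ : SimpleGraph (Fin (r + 1))) : ℝ) := by
  have hdeg (v : Fin n) : (n : ℝ) * (1 - 1 / r) - 1 ≤ (turanGraph n r).degree v := by
    have h1 : (n : ℝ) ≤ (turanGraph n r).degree v + ((n / r : ℕ) : ℝ) + 1 := by
      exact_mod_cast le_degree_turanGraph n r v
    have h2 : ((n / r : ℕ) : ℝ) ≤ n / r := Nat.cast_div_le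
    linarith [show (n : ℝ) * (1 - 1 / r) = n - n / r by ring]
  have hwalk := le_card_walkTuples_of_le_degree hn hdeg
  have hpath := Nat.cast_le (α := ℝ) |>.2 <|
    card_walkTuples_le_card_pathTuples_add (G := turanGraph n r)
  have hex := Nat.cast_le (α := ℝ) |>.2 <| subgraphCount_le_genTuran (T := P3)
    ((isFFree_top_iff_cliqueFree (r := r + 1)).2 (turanGraph_cliqueFree (n := n) hr))
  simp only [card_pathTuples, Fintype.card_fin, Nat.cast_add, Nat.cast_mul, Nat.cast_pow,
    Nat.cast_ofNat] at hwalk hpath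
  linarith

theorem tendsto_genTuran_P3_div_pow {r : ℕ} (hr : 2 ≤ r) :
    Tendsto (fun n : ℕ => (genTuran n P3 (⊤ : SimpleGraph (Fin (r + 1))) : ℝ) / n ^ 4) atTop
      (𝓝 ((1 - 1 / r) ^ 3 / 2)) := by
  set K : ℝ := 1 - 1 / r with hK
  have hK2 : 1 / 2 ≤ K := by
    have : 1 / (r : ℝ) ≤ 1 / 2 := one_div_le_one_div_of_le (by norm_num) (by exact_mod_cast hr)
    linarith
  have hlower : Tendsto (fun n : ℕ => ((K - 1 / n) ^ 3 - 3 * (1 / n)) / 2) atTop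
      (𝓝 (K ^ 3 / 2)) := by
    have hc : Continuous fun t : ℝ => ((K - t) ^ 3 - 3 * t) / 2 := by fun_prop
    simpa [Function.comp_def] using (hc.tendsto 0).comp tendsto_one_div_atTop_nhds_zero_nat
  refine tendsto_of_tendsto_of_tendsto_of_le_of_le' hlower tendsto_const_nhds ?_ ?_
  · filter_upwards [eventually_ge_atTop 2] with n hn
    have hn' : (2 : ℝ) ≤ n := by exact_mod_cast hn
    rw [le_div_iff₀ (by positivity)]
    have := le_two_mul_genTuran_P3 (r := r) (by omega) (n := n) (by nlinarith)
    calc ((K - 1 / n) ^ 3 - 3 * (1 / n)) / 2 * n ^ 4 = (n * (n * K - 1) ^ 3 - 3 * n ^ 3) / 2 := by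
          field_simp
      _ ≤ _ := by linarith
  · filter_upwards [eventually_gt_atTop 0] with n hn
    rw [div_le_iff₀ (by positivity)]
    linarith [two_mul_genTuran_P3_le (by omega : 0 < r) n]

end GenTuran

end SimpleGraph

theorem P3_density_limit (r : ℕ) (hr : 3 ≤ r) :
    Filter.Tendsto
      (fun n : ℕ =>
        (genTuran n P3 (⊤ : SimpleGraph (Fin (r + 1))) : ℝ) / (n.choose 4))
      Filter.atTop (nhds (12 * (((r : ℝ) - 1) / r) ^ 3)) := by
  have hchoose : (fun n : ℕ => (genTuran n P3 (⊤ : SimpleGraph (Fin (r + 1))) : ℝ) / (n ^ 4 / 24))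
      ~[atTop] fun n => (genTuran n P3 (⊤ : SimpleGraph (Fin (r + 1))) : ℝ) / n.choose 4 :=
    (IsEquivalent.refl.div (isEquivalent_choose 4)).symm
  refine hchoose.tendsto_nhds ?_
  convert (tendsto_genTuran_P3_div_pow (r := r) (by omega)).const_mul 24 using 2 with n
  · ring
  · field_simp
    ring
end

section
/- Let r and t be integers with 1 ≤ t < r. Then for every n, every K_r-free graph G on n vertices satisfies ν(K_t, G) ≤ ν(K_t, T_{r−1}(n)); that is, the Turán graph on n vertices with r−1 parts maximizes the number of K_t subgraphs among K_r-free graphs on n vertices. -/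
open SimpleGraph

/-!
Induction on the number `q` of parts. In a `K_{q+2}`-free graph on `n`
vertices, let `v` have maximum degree `a` and let `A` be its neighbourhood. A `(k+1)`-clique either
lies in `A`, or it contains some `b ∉ A` and the rest of it is a `k`-clique in the neighbourhood of
`b`, a `K_{q+1}`-free set of at most `a` vertices. By induction the number of `(k+1)`-cliques is
then at most `e_{k+1}(P) + (n - a) e_k(P) = e_{k+1}(P + {n - a})`, where `P` lists the part sizes
of `T_q(a)` and `e_j` is the elementary symmetric function.

The `j`-cliques of a complete multipartite graph are counted by `e_j` of its part sizes, and
among `q + 1` part sizes with sum `n` the balanced ones, those of `T_{q+1}(n)`, maximise `e_j`: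
moving one vertex from a part to a part smaller by at least two does not decrease `e_j`, since
it fixes the sum of the two sizes and does not decrease their product.
-/

namespace Multiset

theorem esymm_zero {R : Type*} [CommSemiring R] (s : Multiset R) : s.esymm 0 = 1 := by
  simp [esymm]

theorem esymm_cons {R : Type*} [CommSemiring R] (a : R) (s : Multiset R) (k : ℕ) :
    (a ::ₘ s).esymm (k + 1) = s.esymm (k + 1) + a * s.esymm k := by
  simp [esymm, map_map, sum_map_mul_left]

theorem esymm_cons_le_esymm_succ_cons (a : ℕ) (s : Multiset ℕ) (t : ℕ) :
    (a ::ₘ s).esymm t ≤ ((a + 1) ::ₘ s).esymm t := by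
  rcases t with _ | k
  · simp only [esymm_zero, le_refl]
  · simp only [esymm_cons]
    gcongr
    omega

theorem esymm_succ_cons_cons_le {a b : ℕ} (h : b ≤ a) (s : Multiset ℕ) (t : ℕ) :
    ((a + 1) ::ₘ b ::ₘ s).esymm t ≤ (a ::ₘ (b + 1) ::ₘ s).esymm t := by
  rcases t with _ | _ | k
  · simp only [esymm_zero, le_refl]
  · simp only [esymm_cons, esymm_zero]
    omega
  · simp only [esymm_cons]
    have : (a + 1) * b ≤ a * (b + 1) := by nlinarith
    nlinarith [Nat.mul_le_mul_right (s.esymm k) this]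

def IsBalanced (m : Multiset ℕ) : Prop := ∀ x ∈ m, ∀ y ∈ m, x ≤ y + 1

def balancedParts (n p : ℕ) : Multiset ℕ :=
  replicate (n % p) (n / p + 1) + replicate (p - n % p) (n / p)

theorem card_balancedParts {p : ℕ} (hp : 0 < p) (n : ℕ) : card (balancedParts n p) = p := by
  simp [balancedParts, (Nat.mod_lt n hp).le]

theorem sum_balancedParts (n p : ℕ) : (balancedParts n p).sum = n := by
  rcases p.eq_zero_or_pos with rfl | hp
  · simp [balancedParts]
  · have := (Nat.mod_lt n hp).le
    have h := Nat.div_add_mod n p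
    simp only [balancedParts, sum_add, sum_replicate, smul_eq_mul]
    zify [this] at h ⊢
    linear_combination h

theorem balancedParts_mul_add {p k : ℕ} (hk : k < p) (L : ℕ) :
    balancedParts (p * L + k) p = replicate k (L + 1) + replicate (p - k) L := by
  have hp : 0 < p := by omega
  have hdiv : (p * L + k) / p = L := by
    rw [add_comm, Nat.add_mul_div_left _ _ hp, Nat.div_eq_of_lt hk, zero_add]
  have hmod : (p * L + k) % p = k := by rw [Nat.mul_add_mod, Nat.mod_eq_of_lt hk]
  rw [balancedParts, hdiv, hmod]

theorem IsBalanced.eq_balancedParts {m : Multiset ℕ} (h : m.IsBalanced) :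
    m = balancedParts m.sum (card m) := by
  rcases eq_or_ne m 0 with rfl | hm
  · simp [balancedParts]
  obtain ⟨L, hL, hmin⟩ : ∃ L ∈ m, ∀ x ∈ m, L ≤ x := exists_min_image id hm
  have hlow : ∀ x ∈ filter (· ≠ L + 1) m, x = L := by
    intro x hx
    rw [mem_filter] at hx
    have := hmin x hx.1
    have := h x hx.1 L hL
    omega
  set k := count (L + 1) m
  set j := card (filter (· ≠ L + 1) m)
  have hj : 0 < j := card_pos_iff_exists_mem.mpr ⟨L, mem_filter.mpr ⟨hL, by omega⟩⟩
  have hsplit : m = replicate k (L + 1) + replicate j L := by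
    conv_lhs => rw [← filter_add_not (· = L + 1) m]
    rw [filter_eq', ← eq_replicate_card.mpr hlow]
  have hsum : (replicate k (L + 1) + replicate j L).sum = (k + j) * L + k := by
    simp only [sum_add, sum_replicate, smul_eq_mul]; ring
  rw [hsplit, hsum, card_add, card_replicate, card_replicate,
    balancedParts_mul_add (by omega), Nat.add_sub_cancel_left]

theorem exists_isBalanced_esymm_le (m : Multiset ℕ) (t : ℕ) :
    ∃ m' : Multiset ℕ, m'.IsBalanced ∧ card m' = card m ∧ m'.sum = m.sum ∧
      m.esymm t ≤ m'.esymm t := by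
  induction hN : (m.map (· ^ 2)).sum using Nat.strong_induction_on generalizing m with
  | _ N ih =>
    by_cases hm : m.IsBalanced
    · exact ⟨m, hm, rfl, rfl, le_rfl⟩
    simp only [IsBalanced, not_forall, not_le] at hm
    obtain ⟨x, hx, b, hb, hbx⟩ := hm
    obtain ⟨a, rfl⟩ : ∃ a, x = a + 1 := ⟨x - 1, by omega⟩
    obtain ⟨s, rfl⟩ : ∃ s, m = (a + 1) ::ₘ b ::ₘ s :=
      ⟨(m.erase (a + 1)).erase b, by
        rw [cons_erase (mem_erase_of_ne (by omega) |>.mpr hb), cons_erase hx]⟩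
    obtain ⟨m', hbal, hcard, hsum, hle⟩ := ih (((a ::ₘ (b + 1) ::ₘ s).map (· ^ 2)).sum)
      (by subst hN; simp only [map_cons, sum_cons]; nlinarith) (a ::ₘ (b + 1) ::ₘ s) rfl
    exact ⟨m', hbal, by simp [hcard], by simp [hsum]; omega,
      (esymm_succ_cons_cons_le (by omega) s t).trans hle⟩

theorem esymm_le_esymm_balancedParts (m : Multiset ℕ) (t : ℕ) :
    m.esymm t ≤ (balancedParts m.sum (card m)).esymm t := by
  obtain ⟨m', hbal, hcard, hsum, hle⟩ := m.exists_isBalanced_esymm_le t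
  rwa [← hcard, ← hsum, ← hbal.eq_balancedParts]

theorem esymm_balancedParts_le_succ {p : ℕ} (hp : 0 < p) (n t : ℕ) :
    (balancedParts n p).esymm t ≤ (balancedParts (n + 1) p).esymm t := by
  obtain ⟨x, hx⟩ := card_pos_iff_exists_mem.mp ((card_balancedParts hp n).symm ▸ hp)
  set s := (balancedParts n p).erase x
  calc (balancedParts n p).esymm t = (x ::ₘ s).esymm t := by rw [cons_erase hx]
    _ ≤ ((x + 1) ::ₘ s).esymm t := esymm_cons_le_esymm_succ_cons x s t
    _ ≤ (balancedParts ((x + 1) ::ₘ s).sum (card ((x + 1) ::ₘ s))).esymm t :=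
        esymm_le_esymm_balancedParts _ t
    _ = (balancedParts (n + 1) p).esymm t := by
        rw [sum_cons, card_cons, add_right_comm, sum_erase hx, card_erase_add_one hx,
          sum_balancedParts, card_balancedParts hp]

theorem esymm_balancedParts_mono {p : ℕ} (hp : 0 < p) (t : ℕ) :
    Monotone fun n => (balancedParts n p).esymm t :=
  monotone_nat_of_le_succ fun n => esymm_balancedParts_le_succ hp n t

theorem esymm_balancedParts_add_mul_le {q a n : ℕ} (hq : 0 < q) (ha : a ≤ n) (k : ℕ) :
    (balancedParts a q).esymm (k + 1) + (n - a) * (balancedParts a q).esymm k ≤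
      (balancedParts n (q + 1)).esymm (k + 1) := by
  rw [← esymm_cons]
  convert esymm_le_esymm_balancedParts _ (k + 1) using 3
  · rw [sum_cons, sum_balancedParts]; omega
  · rw [card_cons, card_balancedParts hq]

end Multiset

open Finset

theorem Fin.card_filter_mod_eq {n p j : ℕ} (hp : 0 < p) (hj : j < p) :
    #{x : Fin n | (x : ℕ) % p = j} = n / p + if j < n % p then 1 else 0 := by
  calc #{x : Fin n | (x : ℕ) % p = j} = #{x ∈ range n | x ≡ j [MOD p]} := by
        rw [← Nat.Iio_eq_range, ← Fin.map_valEmbedding_univ, filter_map, card_map]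
        simp [Nat.ModEq, Nat.mod_eq_of_lt hj]
    _ = n / p + if j < n % p then 1 else 0 := by
        rw [← Nat.count_eq_card_filter_range, Nat.count_modEq_card n hp, Nat.mod_eq_of_lt hj]

namespace SimpleGraph

theorem CliqueFreeOn.filter_adj {V : Type*} {G : SimpleGraph V} [DecidableRel G.Adj]
    {W : Finset V} {b : V} {n : ℕ} (hW : G.CliqueFreeOn W (n + 1)) (hb : b ∈ W) :
    G.CliqueFreeOn ↑{x ∈ W | G.Adj b x} n := by
  convert hW.of_succ G hb using 1
  ext x
  simp

section CliqueFinsetOn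

variable {V : Type*} [DecidableEq V] (G : SimpleGraph V) [DecidableRel G.Adj]

def cliqueFinsetOn (W : Finset V) (t : ℕ) : Finset (Finset V) :=
  {s ∈ W.powerset | G.IsNClique t s}

variable {G}

@[simp]
theorem mem_cliqueFinsetOn {W s : Finset V} {t : ℕ} :
    s ∈ G.cliqueFinsetOn W t ↔ s ⊆ W ∧ G.IsNClique t s := by
  simp [cliqueFinsetOn]

theorem cliqueFinsetOn_zero (W : Finset V) : G.cliqueFinsetOn W 0 = {∅} := by
  ext s
  simp +contextual [isNClique_zero]

theorem cliqueFinsetOn_empty_succ (k : ℕ) : G.cliqueFinsetOn ∅ (k + 1) = ∅ := by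
  ext s
  simp only [mem_cliqueFinsetOn, subset_empty, notMem_empty, iff_false, not_and]
  rintro rfl
  simp [isNClique_empty]

theorem insert_mem_cliqueFinsetOn {W s : Finset V} {b : V} {k : ℕ} (hb : b ∈ W)
    (hs : s ∈ G.cliqueFinsetOn {x ∈ W | G.Adj b x} k) :
    insert b s ∈ G.cliqueFinsetOn W (k + 1) := by
  rw [mem_cliqueFinsetOn] at hs ⊢
  refine ⟨insert_subset hb fun x hx => (mem_filter.mp (hs.1 hx)).1, hs.2.insert fun x hx => ?_⟩
  exact (mem_filter.mp (hs.1 hx)).2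

theorem erase_mem_cliqueFinsetOn {W s : Finset V} {b : V} {k : ℕ}
    (hs : s ∈ G.cliqueFinsetOn W (k + 1)) (hb : b ∈ s) :
    s.erase b ∈ G.cliqueFinsetOn {x ∈ W | G.Adj b x} k := by
  rw [mem_cliqueFinsetOn] at hs ⊢
  refine ⟨fun x hx => mem_filter.mpr ⟨hs.1 (mem_of_mem_erase hx), ?_⟩, hs.2.erase_of_mem hb⟩
  exact hs.2.isClique hb (mem_of_mem_erase hx) (ne_of_mem_erase hx).symm

theorem cliqueFinsetOn_succ_eq_union {W B : Finset V} (hBW : B ⊆ W) (k : ℕ) :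
    G.cliqueFinsetOn W (k + 1) = G.cliqueFinsetOn (W \ B) (k + 1) ∪
      B.biUnion fun b => (G.cliqueFinsetOn {x ∈ W | G.Adj b x} k).image (insert b) := by
  ext s
  simp only [mem_union, mem_biUnion, mem_image]
  constructor
  · intro hs
    by_cases hsB : Disjoint s B
    · exact Or.inl (mem_cliqueFinsetOn.mpr
        ⟨subset_sdiff.mpr ⟨(mem_cliqueFinsetOn.mp hs).1, hsB⟩, (mem_cliqueFinsetOn.mp hs).2⟩)
    obtain ⟨b, hbs, hbB⟩ := not_disjoint_iff.mp hsB
    exact Or.inr ⟨b, hbB, s.erase b, erase_mem_cliqueFinsetOn hs hbs, insert_erase hbs⟩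
  · rintro (hs | ⟨b, hb, s', hs', rfl⟩)
    · exact mem_cliqueFinsetOn.mpr
        ⟨(mem_cliqueFinsetOn.mp hs).1.trans sdiff_subset, (mem_cliqueFinsetOn.mp hs).2⟩
    · exact insert_mem_cliqueFinsetOn (hBW hb) hs'

theorem card_cliqueFinsetOn_succ_le {W B : Finset V} (hBW : B ⊆ W) (k : ℕ) :
    #(G.cliqueFinsetOn W (k + 1)) ≤ #(G.cliqueFinsetOn (W \ B) (k + 1)) +
      ∑ b ∈ B, #(G.cliqueFinsetOn {x ∈ W | G.Adj b x} k) := by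
  rw [cliqueFinsetOn_succ_eq_union hBW]
  refine (card_union_le _ _).trans ?_
  gcongr
  exact card_biUnion_le.trans (sum_le_sum fun b _ => card_image_le)

theorem card_cliqueFinsetOn_succ_of_isIndepSet {W B : Finset V} (hBW : B ⊆ W)
    (hB : G.IsIndepSet B) (k : ℕ) :
    #(G.cliqueFinsetOn W (k + 1)) = #(G.cliqueFinsetOn (W \ B) (k + 1)) +
      ∑ b ∈ B, #(G.cliqueFinsetOn {x ∈ W | G.Adj b x} k) := by
  have hnbr {b x : V} {s : Finset V} (hb : b ∈ B)
      (hs : s ∈ G.cliqueFinsetOn {x ∈ W | G.Adj b x} k) (hx : x ∈ s) : x ∉ B ∧ x ≠ b := by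
    have hadj := (mem_filter.mp ((mem_cliqueFinsetOn.mp hs).1 hx)).2
    exact ⟨fun hxB => hB hb hxB hadj.ne hadj, hadj.ne'⟩
  have hdisj : Disjoint (G.cliqueFinsetOn (W \ B) (k + 1))
      (B.biUnion fun b => (G.cliqueFinsetOn {x ∈ W | G.Adj b x} k).image (insert b)) := by
    simp only [Finset.disjoint_left, mem_biUnion, mem_image, not_exists, not_and]
    rintro _ hs b hb s' - rfl
    exact (mem_sdiff.mp ((mem_cliqueFinsetOn.mp hs).1 (mem_insert_self b s'))).2 hb
  have hpair : (B : Set V).PairwiseDisjoint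
      fun b => (G.cliqueFinsetOn {x ∈ W | G.Adj b x} k).image (insert b) := by
    intro b hb b' hb' hne
    simp only [Function.onFun, Finset.disjoint_left, mem_image, not_exists, not_and]
    rintro _ ⟨s, -, rfl⟩ s' hs' heq
    have : b ∈ insert b' s' := heq ▸ mem_insert_self b s
    rcases mem_insert.mp this with h | h
    · exact hne h
    · exact (hnbr hb' hs' h).1 hb
  rw [cliqueFinsetOn_succ_eq_union hBW, card_union_of_disjoint hdisj, card_biUnion hpair]
  congr 1
  refine sum_congr rfl fun b hb => card_image_of_injOn fun s hs s' hs' heq => ?_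
  have hbs : b ∉ s := fun h => (hnbr hb hs h).2 rfl
  have hbs' : b ∉ s' := fun h => (hnbr hb hs' h).2 rfl
  rw [← erase_insert hbs, ← erase_insert hbs']
  exact congrArg (erase · b) heq

theorem card_cliqueFinsetOn_eq_esymm {ι : Type*} [DecidableEq ι] (π : V → ι) (u : Finset ι)
    {W : Finset V} (hu : ∀ x ∈ W, π x ∈ u) (hπ : ∀ x ∈ W, ∀ y ∈ W, G.Adj x y ↔ π x ≠ π y)
    (t : ℕ) : #(G.cliqueFinsetOn W t) = (u.val.map fun i => #{x ∈ W | π x = i}).esymm t := by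
  induction u using Finset.induction_on generalizing W t with
  | empty =>
    obtain rfl : W = ∅ := eq_empty_of_forall_notMem fun x hx => notMem_empty _ (hu x hx)
    rcases t with _ | k
    · simp [cliqueFinsetOn_zero, Multiset.esymm_zero]
    · simp [cliqueFinsetOn_empty_succ, Multiset.esymm, Multiset.powersetCard_zero_right]
  | insert i u hi ih =>
    rcases t with _ | k
    · simp [cliqueFinsetOn_zero, Multiset.esymm_zero]
    set B := {x ∈ W | π x = i}
    have hB : G.IsIndepSet B := fun x hx y hy _ hxy =>
      (hπ x (mem_filter.mp hx).1 y (mem_filter.mp hy).1).mp hxy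
        ((mem_filter.mp hx).2.trans (mem_filter.mp hy).2.symm)
    have hnbr : ∀ b ∈ B, {x ∈ W | G.Adj b x} = W \ B := fun b hb => by
      ext x
      simp only [B, mem_filter, mem_sdiff] at hb ⊢
      by_cases hx : x ∈ W
      · simp [hx, hπ b hb.1 x hx, hb.2, eq_comm]
      · simp [hx]
    have hfib : (u.val.map fun j => #{x ∈ W \ B | π x = j}) =
        u.val.map fun j => #{x ∈ W | π x = j} :=
      Multiset.map_congr rfl fun j hj => by
        congr 1
        ext x
        have hji : j ≠ i := ne_of_mem_of_not_mem hj hi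
        simp only [B, mem_filter, mem_sdiff]
        grind
    have ih' := ih (W := W \ B)
      (fun x hx => by
        have := hu x (mem_sdiff.mp hx).1
        simp_all [B])
      (fun x hx y hy => hπ x (mem_sdiff.mp hx).1 y (mem_sdiff.mp hy).1)
    rw [card_cliqueFinsetOn_succ_of_isIndepSet (filter_subset _ _) hB,
      sum_congr rfl fun b hb => by rw [hnbr b hb], sum_const, smul_eq_mul, ih', ih', hfib,
      insert_val_of_notMem hi, Multiset.map_cons, Multiset.esymm_cons]

theorem cliqueFinsetOn_univ [Fintype V] (t : ℕ) :
    G.cliqueFinsetOn univ t = G.cliqueFinset t := by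
  ext s
  simp

theorem card_cliqueFinsetOn_le_esymm_balancedParts {q : ℕ} (hq : 1 ≤ q) {W : Finset V}
    (hW : G.CliqueFreeOn W (q + 1)) (t : ℕ) :
    #(G.cliqueFinsetOn W t) ≤ (Multiset.balancedParts #W q).esymm t := by
  induction q, hq using Nat.le_induction generalizing W t with
  | base =>
    -- an independent set is complete multipartite with a single part
    refine (card_cliqueFinsetOn_eq_esymm (fun _ => ()) {()} (by simp) (fun x hx y hy => ?_)
      t).le.trans_eq ?_
    · simp only [ne_eq, not_true_eq_false, iff_false]
      intro hxy
      exact (G.cliqueFreeOn_two.mp hW) hx hy hxy.ne hxy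
    · simp [Multiset.balancedParts, Nat.mod_one]
  | succ q hq ih =>
    rcases t with _ | k
    · simp [cliqueFinsetOn_zero, Multiset.esymm_zero]
    rcases W.eq_empty_or_nonempty with rfl | hne
    · simp [cliqueFinsetOn_empty_succ]
    obtain ⟨v, hv, hmax⟩ := exists_max_image W (fun v => #{x ∈ W | G.Adj v x}) hne
    set A := {x ∈ W | G.Adj v x}
    calc #(G.cliqueFinsetOn W (k + 1))
        ≤ #(G.cliqueFinsetOn A (k + 1)) +
            ∑ b ∈ W \ A, #(G.cliqueFinsetOn {x ∈ W | G.Adj b x} k) := by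
          have := card_cliqueFinsetOn_succ_le (G := G) (sdiff_subset : W \ A ⊆ W) k
          rwa [Finset.sdiff_sdiff_eq_self (filter_subset _ W)] at this
      _ ≤ (Multiset.balancedParts #A q).esymm (k + 1) +
            ∑ b ∈ W \ A, (Multiset.balancedParts #A q).esymm k := by
          gcongr with b hb
          · exact ih (hW.filter_adj hv) _
          · exact (ih (hW.filter_adj (mem_sdiff.mp hb).1) k).trans
              (Multiset.esymm_balancedParts_mono hq k (hmax b (mem_sdiff.mp hb).1))
      _ = (Multiset.balancedParts #A q).esymm (k + 1) +
            (#W - #A) * (Multiset.balancedParts #A q).esymm k := by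
          rw [sum_const, card_sdiff_of_subset (filter_subset _ _), smul_eq_mul]
      _ ≤ (Multiset.balancedParts #W (q + 1)).esymm (k + 1) :=
          Multiset.esymm_balancedParts_add_mul_le hq (card_le_card (filter_subset _ _)) k

end CliqueFinsetOn

theorem card_cliqueFinset_turanGraph {n p : ℕ} (hp : 0 < p) (t : ℕ) :
    #((turanGraph n p).cliqueFinset t) = (Multiset.balancedParts n p).esymm t := by
  have hparts : (range p).val.map (fun j => #{x : Fin n | (x : ℕ) % p = j}) =
      Multiset.balancedParts n p := by
    have hbal : ((range p).val.map fun j => #{x : Fin n | (x : ℕ) % p = j}).IsBalanced := by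
      simp only [Multiset.IsBalanced, Multiset.mem_map, mem_val, mem_range]
      rintro _ ⟨i, hi, rfl⟩ _ ⟨j, hj, rfl⟩
      rw [Fin.card_filter_mod_eq hp hi, Fin.card_filter_mod_eq hp hj]
      split_ifs <;> omega
    rw [hbal.eq_balancedParts, Multiset.card_map, card_val, card_range, Finset.sum_map_val,
      ← card_eq_sum_card_fiberwise (fun x _ => mem_range.mpr (Nat.mod_lt _ hp)), card_univ,
      Fintype.card_fin]
  rw [← cliqueFinsetOn_univ, card_cliqueFinsetOn_eq_esymm (fun x : Fin n => (x : ℕ) % p) (range p)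
    (fun x _ => mem_range.mpr (Nat.mod_lt _ hp)) (fun _ _ _ _ => turanGraph_adj) t]
  simpa using congrArg (Multiset.esymm · t) hparts

theorem isFFree_iff_free_s3 {α β : Type*} {F : SimpleGraph α} {G : SimpleGraph β} :
    IsFFree F G ↔ F.Free G := by
  simp only [IsFFree, Free, isContained_iff_exists_iso_subgraph, not_exists, not_nonempty_iff]

theorem Subgraph.adj_iff_of_iso_top {α V : Type*} {G : SimpleGraph V} {H : G.Subgraph}
    (e : (⊤ : SimpleGraph α) ≃g H.coe) {a b : V} :
    H.Adj a b ↔ a ∈ H.verts ∧ b ∈ H.verts ∧ a ≠ b := by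
  refine ⟨fun h => ⟨H.edge_vert h, H.edge_vert h.symm, h.ne⟩, fun ⟨ha, hb, hab⟩ => ?_⟩
  have : e.symm ⟨a, ha⟩ ≠ e.symm ⟨b, hb⟩ := by simpa using hab
  simpa using e.map_adj_iff.mpr this

theorem subgraphCount_top_eq_card_cliqueFinset {V : Type*} [Fintype V] [DecidableEq V]
    (G : SimpleGraph V) [DecidableRel G.Adj] (t : ℕ) :
    subgraphCount (⊤ : SimpleGraph (Fin t)) G = #(G.cliqueFinset t) := by
  classical
  have hiso (s : Finset V) (hs : G.IsNClique t s) :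
      Nonempty ((⊤ : SimpleGraph (Fin t)) ≃g ((⊤ : G.Subgraph).induce s).coe) := by
    let e : Fin t ≃ s := (s.equivFin.trans (finCongr hs.card_eq)).symm
    refine ⟨⟨e, fun {a b} => ?_⟩⟩
    have hne : (e a : V) ≠ e b ↔ a ≠ b := Subtype.coe_injective.ne_iff.trans e.injective.ne_iff
    simp only [Subgraph.coe_adj, Subgraph.induce_adj, Subgraph.top_adj, top_adj, ← hne]
    exact ⟨fun h => h.2.2.ne, fun h => ⟨(e a).2, (e b).2, hs.isClique (e a).2 (e b).2 h⟩⟩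
  rw [subgraphCount, ← Nat.card_eq_finsetCard]
  symm
  refine Nat.card_eq_of_bijective (fun s => ⟨(⊤ : G.Subgraph).induce s.1,
    hiso s.1 (mem_cliqueFinset_iff.mp s.2)⟩) ⟨fun s s' h => ?_, fun ⟨H, ⟨e⟩⟩ => ?_⟩
  · exact Subtype.ext (coe_injective (congrArg (fun H => H.1.verts) h))
  · have hcard : #H.verts.toFinset = t := by
      rw [Set.toFinset_card, ← Fintype.card_fin t]
      exact Fintype.card_congr e.toEquiv.symm
    refine ⟨⟨H.verts.toFinset, mem_cliqueFinset_iff.mpr ⟨fun a ha b hb hab => ?_, hcard⟩⟩, ?_⟩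
    · rw [Set.coe_toFinset] at ha hb
      exact H.adj_sub ((Subgraph.adj_iff_of_iso_top e).mpr ⟨ha, hb, hab⟩)
    · refine Subtype.ext (Subgraph.ext (Set.coe_toFinset _) ?_)
      ext a b
      simp only [Set.coe_toFinset, Subgraph.induce_adj, Subgraph.top_adj,
        Subgraph.adj_iff_of_iso_top e]
      exact ⟨fun h => ⟨h.1, h.2.1, h.2.2.ne⟩,
        fun h => ⟨h.1, h.2.1, H.adj_sub ((Subgraph.adj_iff_of_iso_top e).mpr h)⟩⟩

end SimpleGraph

theorem zykov_clique_count (r t : ℕ) (ht : 1 ≤ t) (htr : t < r) (n : ℕ)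
    (G : SimpleGraph (Fin n)) (hG : IsFFree (⊤ : SimpleGraph (Fin r)) G) :
    subgraphCount (⊤ : SimpleGraph (Fin t)) G ≤
      subgraphCount (⊤ : SimpleGraph (Fin t)) (turanGraph n (r - 1)) := by
  classical
  have hfree : G.CliqueFreeOn ↑(univ : Finset (Fin n)) (r - 1 + 1) := by
    rw [coe_univ, cliqueFreeOn_univ, Nat.sub_add_cancel (by omega : 1 ≤ r)]
    simpa using cliqueFree_iff_top_free.mpr (isFFree_iff_free_s3.mp hG)
  rw [subgraphCount_top_eq_card_cliqueFinset, subgraphCount_top_eq_card_cliqueFinset,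
    card_cliqueFinset_turanGraph (by omega), ← cliqueFinsetOn_univ]
  simpa using card_cliqueFinsetOn_le_esymm_balancedParts (by omega) hfree t
end

section
/- Let r ≥ 2 and n be positive integers with r dividing n. Then the number of P_3 subgraphs of the Turán graph T_r(n) is exactly ν(P_3, T_r(n)) = C(r,2)·(n/r)^2·( (n/r − 1)^2 + (n − 2n/r)·(n − 3) ). -/
open SimpleGraph

/-!
A labelled copy `a - b - c - d` of `P₃` is determined by its middle edge `(b, c)` together with
ends `a ∈ N(b) \ {c}` and `d ∈ N(c) \ {b}` with `a ≠ d`; so an edge `bc` extends in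
`(deg b - 1)(deg c - 1) - |N(b) ∩ N(c)|` ways. In `T_r(n)` with parts of size `m` every degree
is `n - m` and two adjacent vertices have `n - 2m` common neighbours, giving
`n (n - m) ((n - m - 1)² - (n - 2m))` labelled copies. Each subgraph isomorphic to `P₃` is the
image of exactly `|Aut P₃| = 2` of them.
-/

open Finset

namespace SimpleGraph

variable {V V' W : Type*} {G : SimpleGraph V} {H : SimpleGraph W}

namespace Copy

lemma toSubgraph_adj_apply (f : Copy H G) {u v : W} :
    f.toSubgraph.Adj (f u) (f v) ↔ H.Adj u v := by
  refine ⟨fun ⟨u', v', h, hu, hv⟩ => ?_, fun h => ⟨u, v, h, rfl, rfl⟩⟩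
  rwa [← f.injective hu, ← f.injective hv]

lemma toSubgraph_comp_iso (f : Copy H G) (σ : H ≃g H) :
    (f.comp σ.toCopy).toSubgraph = f.toSubgraph := by
  change Subgraph.map (f.toHom.comp σ.toHom) ⊤ = _
  rw [Subgraph.map_comp, Subgraph.map_iso_top]

lemma exists_iso_of_toSubgraph_eq {f g : Copy H G} (h : g.toSubgraph = f.toSubgraph) :
    ∃ σ : H ≃g H, g = f.comp σ.toCopy := by
  have hrange : Set.range g = Set.range f := by
    simpa [Set.image_univ] using congrArg Subgraph.verts h
  let σ : W ≃ W := (Equiv.ofInjective g g.injective).trans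
    ((Equiv.setCongr hrange).trans (Equiv.ofInjective f f.injective).symm)
  have hσ (w : W) : f (σ w) = g w := Equiv.apply_ofInjective_symm f.injective _
  refine ⟨⟨σ, fun {u v} => ?_⟩, Copy.ext fun w => (hσ w).symm⟩
  rw [← f.toSubgraph_adj_apply, hσ, hσ, ← h, g.toSubgraph_adj_apply]

lemma natCard_toSubgraph_fiber (f : Copy H G) :
    Nat.card {g : Copy H G // g.toSubgraph = f.toSubgraph} = Nat.card (H ≃g H) := by
  refine (Nat.card_congr (Equiv.ofBijective (fun σ => ⟨f.comp σ.toCopy, f.toSubgraph_comp_iso σ⟩)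
    ⟨fun σ τ h => ?_, fun ⟨g, hg⟩ => ?_⟩)).symm
  · ext w
    exact f.injective (congrArg (· w) (congrArg Subtype.val h) :)
  · obtain ⟨σ, rfl⟩ := exists_iso_of_toSubgraph_eq hg
    exact ⟨σ, rfl⟩

def pathFour {a b c d : V} (hab : G.Adj a b) (hbc : G.Adj b c) (hcd : G.Adj c d)
    (hac : a ≠ c) (had : a ≠ d) (hbd : b ≠ d) : Copy (pathGraph 4) G :=
  Hom.toCopy ⟨![a, b, c, d], fun {i j} hij => by
    rw [pathGraph_adj] at hij
    fin_cases i <;> fin_cases j <;> simp at hij ⊢ <;> first | assumption | exact Adj.symm ‹_›⟩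
  fun i j h => by
    have := hab.ne; have := hbc.ne; have := hcd.ne
    fin_cases i <;> fin_cases j <;> simp_all

end Copy

theorem copyCount_mul_natCard_iso [Fintype V] [Fintype W] (G : SimpleGraph V) (H : SimpleGraph W) :
    G.copyCount H * Nat.card (H ≃g H) = G.labelledCopyCount H := by
  classical
  rw [copyCount_eq_card_image_copyToSubgraph, labelledCopyCount, ← card_univ,
    card_eq_sum_card_image Copy.toSubgraph univ, sum_const_nat]
  simp only [mem_image, mem_univ, true_and, forall_exists_index]
  rintro _ f rfl
  rw [← Copy.natCard_toSubgraph_fiber f, Nat.card_eq_fintype_card, Fintype.card_subtype]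

theorem labelledCopyCount_congr [Fintype V] [Fintype V'] [Fintype W] {G' : SimpleGraph V'}
    (e : G ≃g G') (H : SimpleGraph W) : G.labelledCopyCount H = G'.labelledCopyCount H := by
  rw [labelledCopyCount, labelledCopyCount, Fintype.card_eq_nat_card, Fintype.card_eq_nat_card]
  exact Nat.card_congr
    { toFun f := e.toCopy.comp f
      invFun f := e.symm.toCopy.comp f
      left_inv f := by ext; simp [Copy.comp_apply]
      right_inv f := by ext; simp [Copy.comp_apply] }

theorem natCard_iso_pathGraph_four : Nat.card (pathGraph 4 ≃g pathGraph 4) = 2 := by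
  let e : (pathGraph 4 ≃g pathGraph 4) ≃ {σ : Equiv.Perm (Fin 4) // ∀ i j : Fin 4,
      ((σ i : ℕ) + 1 = σ j ∨ (σ j : ℕ) + 1 = σ i) ↔ ((i : ℕ) + 1 = j ∨ (j : ℕ) + 1 = i)} :=
    { toFun φ := ⟨φ.toEquiv, fun _ _ => by
        rw [← pathGraph_adj, ← pathGraph_adj]; exact φ.map_rel_iff⟩
      invFun σ := ⟨σ.1, fun {i j} => by simpa only [pathGraph_adj] using σ.2 i j⟩ }
  rw [Nat.card_congr e, Nat.card_eq_fintype_card]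
  decide

section PathFour

variable [Fintype V] [DecidableEq V] [DecidableRel G.Adj]

def pathExtensions (b c : V) : Finset (V × V) :=
  {p ∈ (G.neighborFinset b).erase c ×ˢ (G.neighborFinset c).erase b | p.1 ≠ p.2}

lemma mem_pathExtensions {b c : V} {p : V × V} : p ∈ G.pathExtensions b c ↔
    G.Adj p.1 b ∧ G.Adj c p.2 ∧ p.1 ≠ c ∧ p.1 ≠ p.2 ∧ b ≠ p.2 := by
  simp only [pathExtensions, mem_filter, mem_product, mem_erase, mem_neighborFinset]
  grind [Adj.symm]

lemma card_pathExtensions {b c : V} (h : G.Adj b c) :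
    (#(G.pathExtensions b c) : ℤ) =
      ((G.degree b : ℤ) - 1) * (G.degree c - 1) - #(G.neighborFinset b ∩ G.neighborFinset c) := by
  set A := (G.neighborFinset b).erase c
  set D := (G.neighborFinset c).erase b
  have hdiag : {p ∈ A ×ˢ D | ¬p.1 ≠ p.2} = (G.neighborFinset b ∩ G.neighborFinset c).diag := by
    ext ⟨x, y⟩
    simp only [A, D, mem_filter, mem_product, mem_erase, mem_neighborFinset, not_not, mem_diag,
      mem_inter]
    constructor
    · rintro ⟨⟨⟨-, hx⟩, -, hy⟩, rfl⟩; exact ⟨⟨hx, hy⟩, rfl⟩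
    · rintro ⟨⟨hx, hy⟩, rfl⟩; exact ⟨⟨⟨hy.ne', hx⟩, hx.ne', hy⟩, rfl⟩
  have hA : (#A : ℤ) = G.degree b - 1 := by
    rw [← card_neighborFinset_eq_degree, ← card_erase_add_one ((G.mem_neighborFinset _ _).2 h)]
    push_cast; ring
  have hD : (#D : ℤ) = G.degree c - 1 := by
    rw [← card_neighborFinset_eq_degree,
      ← card_erase_add_one ((G.mem_neighborFinset _ _).2 h.symm)]
    push_cast; ring
  have hsplit := card_filter_add_card_filter_not (s := A ×ˢ D) (fun p => p.1 ≠ p.2)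
  rw [hdiag, diag_card, card_product] at hsplit
  have hsplitZ := congrArg (Nat.cast : ℕ → ℤ) hsplit
  push_cast at hsplitZ
  show (#{p ∈ A ×ˢ D | p.1 ≠ p.2} : ℤ) = _
  rw [← hA, ← hD]
  linarith

def copyPathFourEquiv : Copy (pathGraph 4) G ≃
    (univ.sigma fun b => (G.neighborFinset b).sigma fun c => G.pathExtensions b c) where
  toFun f := ⟨⟨f 1, f 2, f 0, f 3⟩, by
    have adj (i j : Fin 4) (h : i.val + 1 = j.val) : G.Adj (f i) (f j) :=
      f.toHom.map_adj (pathGraph_adj.2 (Or.inl h))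
    have ne (i j : Fin 4) (h : i ≠ j) : f i ≠ f j := f.injective.ne h
    simp only [mem_sigma, mem_univ, mem_neighborFinset, mem_pathExtensions, true_and]
    exact ⟨adj 1 2 rfl, adj 0 1 rfl, adj 2 3 rfl, ne 0 2 (by decide), ne 0 3 (by decide),
      ne 1 3 (by decide)⟩⟩
  invFun x := by
    have hx := x.2
    simp only [mem_sigma, mem_univ, mem_neighborFinset, mem_pathExtensions, true_and] at hx
    exact Copy.pathFour hx.2.1 hx.1 hx.2.2.1 hx.2.2.2.1 hx.2.2.2.2.1 hx.2.2.2.2.2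
  left_inv f := by
    ext i; fin_cases i <;> rfl
  right_inv x := rfl

theorem labelledCopyCount_pathGraph_four :
    (G.labelledCopyCount (pathGraph 4) : ℤ) = ∑ b, ∑ c ∈ G.neighborFinset b,
      (((G.degree b : ℤ) - 1) * (G.degree c - 1) - #(G.neighborFinset b ∩ G.neighborFinset c)) := by
  have hcard : G.labelledCopyCount (pathGraph 4) =
      #(univ.sigma fun b => (G.neighborFinset b).sigma fun c => G.pathExtensions b c) := by
    rw [labelledCopyCount, Fintype.card_eq_nat_card, Nat.card_congr copyPathFourEquiv,
      Nat.card_eq_finsetCard]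
  rw [hcard, card_sigma]
  push_cast
  refine sum_congr rfl fun b _ => ?_
  rw [card_sigma]
  push_cast
  exact sum_congr rfl fun c hc => card_pathExtensions ((G.mem_neighborFinset _ _).1 hc)

end PathFour

section CompleteEquipartiteGraph

variable {r t : ℕ}

theorem card_neighborFinset_inter_completeEquipartiteGraph {v w : Fin r × Fin t} (h : v.1 ≠ w.1) :
    #((completeEquipartiteGraph r t).neighborFinset v ∩
      (completeEquipartiteGraph r t).neighborFinset w) = (r - 2) * t := by
  rw [neighborFinset_completeEquipartiteGraph, neighborFinset_completeEquipartiteGraph,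
    product_inter_product, inter_self, card_product, ← compl_union, card_compl, card_univ,
    Fintype.card_fin, Fintype.card_fin, ← insert_eq, card_pair h]

theorem labelledCopyCount_pathGraph_four_completeEquipartiteGraph (hr : 2 ≤ r) :
    ((completeEquipartiteGraph r t).labelledCopyCount (pathGraph 4) : ℤ) =
      r * t * ((r - 1) * t) * (((r - 1) * t - 1) ^ 2 - (r - 2) * t) := by
  have hcodeg (v w : Fin r × Fin t) (h : (completeEquipartiteGraph r t).Adj v w) :
      (#((completeEquipartiteGraph r t).neighborFinset v ∩
        (completeEquipartiteGraph r t).neighborFinset w) : ℤ) = (r - 2) * t := by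
    rw [card_neighborFinset_inter_completeEquipartiteGraph h, Nat.cast_mul, Nat.cast_sub hr]
    norm_num
  rw [labelledCopyCount_pathGraph_four]
  calc _ = ∑ b : Fin r × Fin t, ∑ _c ∈ (completeEquipartiteGraph r t).neighborFinset b,
        (((((r - 1) * t : ℕ) : ℤ) - 1) ^ 2 - (r - 2) * t) := by
        refine sum_congr rfl fun b _ => sum_congr rfl fun c hc => ?_
        rw [hcodeg b c ((mem_neighborFinset _ _ _).1 hc), degree_completeEquipartiteGraph,
          degree_completeEquipartiteGraph, sq]
    _ = _ := by
        simp only [sum_const, card_neighborFinset_eq_degree, degree_completeEquipartiteGraph,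
          card_univ, Fintype.card_prod, Fintype.card_fin, nsmul_eq_mul]
        push_cast [Nat.cast_sub (by omega : 1 ≤ r)]
        ring

end CompleteEquipartiteGraph

end SimpleGraph

theorem subgraphCount_eq_copyCount {α β : Type*} [Fintype β] (T : SimpleGraph α)
    (G : SimpleGraph β) : subgraphCount T G = G.copyCount T := by
  classical
  rw [subgraphCount, copyCount, Nat.card_eq_fintype_card, Fintype.card_subtype]

theorem P3_count_turanGraph_divisible_general (r n m : ℕ) (hr : 2 ≤ r)
    (hm : n = r * m) :
    (subgraphCount P3 (turanGraph n r) : ℤ) =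
      (r.choose 2 : ℤ) * m ^ 2 *
        (((m : ℤ) - 1) ^ 2 + ((n : ℤ) - 2 * m) * ((n : ℤ) - 3)) := by
  subst hm
  have hcopies := (turanGraph (r * m) r).copyCount_mul_natCard_iso P3
  rw [P3, natCard_iso_pathGraph_four,
    ← labelledCopyCount_congr completeEquipartiteGraph.turanGraph] at hcopies
  have hlabelled := labelledCopyCount_pathGraph_four_completeEquipartiteGraph (t := m) hr
  have hchoose : r.choose 2 * 2 = r * (r - 1) := by
    rw [Nat.choose_two_right, Nat.div_mul_cancel (Nat.even_mul_pred_self r).two_dvd]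
  zify [(by omega : 1 ≤ r)] at hcopies hchoose
  rw [subgraphCount_eq_copyCount, P3]
  refine mul_right_cancel₀ (two_ne_zero' ℤ) ?_
  push_cast
  linear_combination hcopies + hlabelled -
    m ^ 2 * (((m : ℤ) - 1) ^ 2 + ((r * m : ℤ) - 2 * m) * ((r * m : ℤ) - 3)) * hchoose

theorem P3_count_turanGraph_divisible (r n m : ℕ) (hr : 2 ≤ r) (hn : 0 < n)
    (hm : n = r * m) :
    (subgraphCount P3 (turanGraph n r) : ℤ) =
      (r.choose 2 : ℤ) * m ^ 2 *
        (((m : ℤ) - 1) ^ 2 + ((n : ℤ) - 2 * m) * ((n : ℤ) - 3)) :=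
  P3_count_turanGraph_divisible_general r n m hr hm
end

section
/- Let G be a complete multipartite graph on n vertices with parts V_1, …, V_r. Then the number of P_3 subgraphs of G is ν(P_3, G) = Σ_{1 ≤ i < j ≤ r} |V_i|·|V_j|·( (|V_i|−1)(|V_j|−1) + (n−|V_i|−|V_j|)(n−3) ). -/
open SimpleGraph

set_option maxRecDepth 10000

open Finset

section PartA

variable {V : Type*} {G : SimpleGraph V} {f g : Fin 4 → V}

def GoodTuple (G : SimpleGraph V) (f : Fin 4 → V) : Prop :=
  Function.Injective f ∧ ∀ i j, (pathGraph 4).Adj i j → G.Adj (f i) (f j)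

def GoodTuple.hom (h : GoodTuple G f) : pathGraph 4 →g G :=
  ⟨f, fun hij => h.2 _ _ hij⟩

def tupleSubgraph (h : GoodTuple G f) : G.Subgraph := Subgraph.map h.hom ⊤

lemma tupleSubgraph_verts (h : GoodTuple G f) :
    (tupleSubgraph h).verts = Set.range f := by
  show (fun a => f a) '' Set.univ = _
  rw [Set.image_univ]

lemma tupleSubgraph_adj (h : GoodTuple G f) (x y : V) :
    (tupleSubgraph h).Adj x y ↔ ∃ i j, (pathGraph 4).Adj i j ∧ f i = x ∧ f j = y := by
  show Relation.Map (pathGraph 4).Adj (fun a => f a) (fun a => f a) x y ↔ _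
  exact Iff.rfl

lemma tupleSubgraph_adj_iff (h : GoodTuple G f) (i j : Fin 4) :
    (tupleSubgraph h).Adj (f i) (f j) ↔ (pathGraph 4).Adj i j := by
  rw [tupleSubgraph_adj]
  constructor
  · rintro ⟨i', j', hadj, hi, hj⟩
    rwa [h.1 hi, h.1 hj] at hadj
  · intro hadj
    exact ⟨i, j, hadj, rfl, rfl⟩

noncomputable def tupleIso (h : GoodTuple G f) : P3 ≃g (tupleSubgraph h).coe := by
  refine ⟨(Equiv.ofInjective f h.1).trans (Equiv.setCongr (tupleSubgraph_verts h).symm), ?_⟩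
  intro i j
  simp only [Equiv.trans_apply, Equiv.setCongr_apply, Equiv.ofInjective_apply,
    Subgraph.coe_adj]
  exact tupleSubgraph_adj_iff h i j

lemma exists_goodTuple_of_iso (H : G.Subgraph) (e : P3 ≃g H.coe) :
    ∃ (f : Fin 4 → V) (h : GoodTuple G f), tupleSubgraph h = H := by
  refine ⟨fun i => (e i : V), ⟨?_, ?_⟩, ?_⟩
  · intro i j hij
    exact e.toEquiv.injective (Subtype.ext hij)
  · intro i j hij
    exact H.adj_sub ((Subgraph.coe_adj _ _ _).mp (e.map_adj_iff.mpr (show P3.Adj i j from hij)))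
  · set f : Fin 4 → V := fun i => (e i : V) with hf
    set hgood : GoodTuple G f := ⟨fun i j hij => e.toEquiv.injective (Subtype.ext hij),
      fun i j hij => H.adj_sub ((Subgraph.coe_adj _ _ _).mp (e.map_adj_iff.mpr hij))⟩
    ext x y
    · rw [tupleSubgraph_verts]
      constructor
      · rintro ⟨i, rfl⟩; exact (e i).2
      · intro hx
        exact ⟨e.symm ⟨x, hx⟩, by simp [hf]⟩
    · rw [tupleSubgraph_adj]
      constructor
      · rintro ⟨i, j, hadj, rfl, rfl⟩
        exact (Subgraph.coe_adj _ _ _).mp (e.map_adj_iff.mpr (show P3.Adj i j from hadj))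
      · intro hxy
        have hx : x ∈ H.verts := H.edge_vert hxy
        have hy : y ∈ H.verts := H.edge_vert hxy.symm
        refine ⟨e.symm ⟨x, hx⟩, e.symm ⟨y, hy⟩, ?_, by simp [hf], by simp [hf]⟩
        exact e.symm.map_adj_iff.mpr ((Subgraph.coe_adj _ _ _).mpr hxy)

lemma perm_decide : ∀ σ : Fin 4 → Fin 4, Function.Injective σ →
    (∀ i j : Fin 4, ((σ i).val + 1 = (σ j).val ∨ (σ j).val + 1 = (σ i).val) ↔
      (i.val + 1 = j.val ∨ j.val + 1 = i.val)) →
    (∀ i, σ i = i) ∨ (∀ i, σ i = i.rev) := by decide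

lemma tupleSubgraph_eq_cases (hf : GoodTuple G f) (hg : GoodTuple G g)
    (heq : tupleSubgraph hf = tupleSubgraph hg) : g = f ∨ g = f ∘ Fin.rev := by
  have hrange : Set.range g = Set.range f := by
    rw [← tupleSubgraph_verts hf, ← tupleSubgraph_verts hg, heq]
  have hmem : ∀ i, ∃ j, f j = g i := by
    intro i
    have : g i ∈ Set.range f := hrange ▸ Set.mem_range_self i
    exact this
  choose σ hσ using hmem
  have hσinj : Function.Injective σ := by
    intro i j hij
    apply hg.1
    rw [← hσ i, ← hσ j, hij]
  have hadj : ∀ i j, (pathGraph 4).Adj (σ i) (σ j) ↔ (pathGraph 4).Adj i j := by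
    intro i j
    rw [← tupleSubgraph_adj_iff hf, hσ i, hσ j, heq, tupleSubgraph_adj_iff hg]
  have := perm_decide σ hσinj (fun i j => by
    rw [← pathGraph_adj, ← pathGraph_adj]; exact hadj i j)
  rcases this with h | h
  · left; funext i; rw [← hσ i, h i]
  · right; funext i; rw [← hσ i, h i]; rfl

lemma goodTuple_rev (hf : GoodTuple G f) : GoodTuple G (f ∘ Fin.rev) := by
  constructor
  · exact hf.1.comp Fin.rev_injective
  · intro i j hij
    apply hf.2
    rw [pathGraph_adj] at hij ⊢
    simp only [Fin.val_rev] at *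
    omega

lemma tupleSubgraph_rev (hf : GoodTuple G f) :
    tupleSubgraph (goodTuple_rev hf) = tupleSubgraph hf := by
  ext x y
  · rw [tupleSubgraph_verts, tupleSubgraph_verts]
    rw [Set.range_comp]
    rw [Set.range_eq_univ.mpr Fin.rev_surjective, Set.image_univ]
  · rw [tupleSubgraph_adj, tupleSubgraph_adj]
    constructor
    · rintro ⟨i, j, hadj, rfl, rfl⟩
      refine ⟨i.rev, j.rev, ?_, rfl, rfl⟩
      rw [pathGraph_adj] at hadj ⊢
      simp only [Fin.val_rev] at *
      omega
    · rintro ⟨i, j, hadj, rfl, rfl⟩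
      refine ⟨i.rev, j.rev, ?_, by simp, by simp⟩
      rw [pathGraph_adj] at hadj ⊢
      simp only [Fin.val_rev] at *
      omega

end PartA

section PartACount

variable {V : Type*} [Fintype V]

lemma natCard_goodTuple_eq (G : SimpleGraph V) :
    Nat.card {f : Fin 4 → V // GoodTuple G f} = 2 * subgraphCount P3 G := by
  classical
  set ι : V → ℕ := fun v => (Fintype.equivFin V v : ℕ) with hι
  have hιinj : Function.Injective ι := fun v w h =>
    (Fintype.equivFin V).injective (Fin.ext h)
  set Ψ : {f : Fin 4 → V // GoodTuple G f} →
      {H : G.Subgraph // Nonempty (P3 ≃g H.coe)} × Bool :=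
    fun f => (⟨tupleSubgraph f.2, ⟨tupleIso f.2⟩⟩, decide (ι (f.1 0) < ι (f.1 3))) with hΨ
  have hne : ∀ f : {f : Fin 4 → V // GoodTuple G f}, f.1 0 ≠ f.1 3 := by
    intro f h
    have := f.2.1 h
    exact absurd this (by decide)
  have hbij : Function.Bijective Ψ := by
    constructor
    · rintro f g hfg
      have h1 : tupleSubgraph f.2 = tupleSubgraph g.2 := congrArg (fun p => p.1.1) hfg
      have h2 : decide (ι (f.1 0) < ι (f.1 3)) = decide (ι (g.1 0) < ι (g.1 3)) :=
        congrArg Prod.snd hfg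
      rcases tupleSubgraph_eq_cases f.2 g.2 h1 with h | h
      · exact Subtype.ext h.symm
      · exfalso
        have e0 : g.1 0 = f.1 3 := by rw [h]; exact congrArg f.1 (by decide)
        have e3 : g.1 3 = f.1 0 := by rw [h]; exact congrArg f.1 (by decide)
        rw [e0, e3] at h2
        have hne' : ι (f.1 0) ≠ ι (f.1 3) := fun hh => hne f (hιinj hh)
        rcases lt_or_gt_of_ne hne' with hlt | hlt <;> simp [hlt, asymm hlt] at h2
    · rintro ⟨t, b⟩
      obtain ⟨e⟩ := t.2
      obtain ⟨f, hf, hEq⟩ := exists_goodTuple_of_iso t.1 e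
      by_cases hb : decide (ι (f 0) < ι (f 3)) = b
      · exact ⟨⟨f, hf⟩, Prod.ext (Subtype.ext hEq) hb⟩
      · refine ⟨⟨f ∘ Fin.rev, goodTuple_rev hf⟩, Prod.ext (Subtype.ext ?_) ?_⟩
        · exact (tupleSubgraph_rev hf).trans hEq
        · show decide (ι ((f ∘ Fin.rev) 0) < ι ((f ∘ Fin.rev) 3)) = b
          have e0 : (f ∘ Fin.rev) 0 = f 3 := congrArg f (by decide)
          have e3 : (f ∘ Fin.rev) 3 = f 0 := congrArg f (by decide)
          rw [e0, e3]
          have hne' : ι (f 0) ≠ ι (f 3) := fun hh =>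
            hne ⟨f, hf⟩ (hιinj hh)
          rcases lt_or_gt_of_ne hne' with hlt | hlt <;>
            simp only [hlt, asymm hlt, decide_eq_true_eq, decide_eq_false_iff_not] at hb ⊢ <;>
            cases b <;> simp_all
  rw [Nat.card_congr (Equiv.ofBijective Ψ hbij), Nat.card_prod, subgraphCount]
  rw [Nat.card_eq_fintype_card (α := Bool)]
  simp [mul_comm]

end PartACount

section PartB
variable {r : ℕ} {a : Fin r → ℕ} {n : ℕ}

local notation "V" => Σ i : Fin r, Fin (a i)


lemma card_part (j : Fin r) : (univ.filter fun v : V => v.1 = j).card = a j := by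
  rw [Finset.card_filter, ← Finset.univ_sigma_univ, Finset.sum_sigma]
  simp [apply_ite Finset.card, Finset.sum_ite_eq' (univ : Finset (Fin r)) j (fun i => a i)]

lemma card_V (hn : n = ∑ i, a i) : Fintype.card V = n := by
  simp [Fintype.card_sigma, hn]

lemma card_ne (hn : n = ∑ i, a i) (j : Fin r) :
    ((univ.filter fun v : V => v.1 ≠ j).card : ℤ) = (n : ℤ) - a j := by
  have h := Finset.card_filter_add_card_filter_not
    (s := (univ : Finset V)) (p := fun v => v.1 = j)
  rw [Finset.card_univ, card_V hn, card_part j] at h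
  have : ((univ.filter fun v : V => ¬ v.1 = j).card : ℤ) = (n : ℤ) - a j := by
    omega
  simpa using this

lemma card_ne2 (hn : n = ∑ i, a i) {i j : Fin r} (hij : i ≠ j) :
    ((univ.filter fun v : V => v.1 ≠ i ∧ v.1 ≠ j).card : ℤ) = (n : ℤ) - a i - a j := by
  have h1 : (univ.filter fun v : V => v.1 = i ∨ v.1 = j).card = a i + a j := by
    rw [Finset.filter_or, Finset.card_union_of_disjoint, card_part, card_part]
    rw [Finset.disjoint_filter]
    intro v _ h1 h2
    exact hij (h1 ▸ h2 ▸ rfl)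
  have h := Finset.card_filter_add_card_filter_not
    (s := (univ : Finset V)) (p := fun v => v.1 = i ∨ v.1 = j)
  rw [Finset.card_univ, card_V hn, h1] at h
  have h2 : ((univ.filter fun v : V => ¬(v.1 = i ∨ v.1 = j)).card : ℤ)
      = (n : ℤ) - a i - a j := by omega
  rw [← h2]
  have : (univ.filter fun v : V => v.1 ≠ i ∧ v.1 ≠ j)
      = (univ.filter fun v : V => ¬(v.1 = i ∨ v.1 = j)) := by
    apply Finset.filter_congr
    intro v _
    tauto
  rw [this]

lemma sum_fst (g : Fin r → ℤ) : ∑ v : V, g v.1 = ∑ i, (a i : ℤ) * g i := by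
  rw [← Finset.univ_sigma_univ, Finset.sum_sigma]
  simp [mul_comm]

lemma inner3 (hn : n = ∑ i, a i) (v0 v1 v2 : V) (h12 : v1.1 ≠ v2.1) (h01 : v0 ≠ v1) :
    ((univ.filter fun v3 : V => v3.1 ≠ v2.1 ∧ v3 ≠ v1 ∧ v3 ≠ v0).card : ℤ)
      = ((n : ℤ) - a v2.1 - 1) - (if v0.1 ≠ v2.1 then 1 else 0) := by
  have hset : (univ.filter fun v3 : V => v3.1 ≠ v2.1 ∧ v3 ≠ v1 ∧ v3 ≠ v0)
      = ((univ.filter fun v3 : V => v3.1 ≠ v2.1).erase v1).erase v0 := by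
    ext v
    simp only [Finset.mem_filter, Finset.mem_erase, Finset.mem_univ, true_and]
    tauto
  have hv1mem : v1 ∈ univ.filter fun v3 : V => v3.1 ≠ v2.1 := by
    simp [h12]
  rw [hset]
  by_cases h0 : v0.1 = v2.1
  · have : v0 ∉ ((univ.filter fun v3 : V => v3.1 ≠ v2.1).erase v1) := by
      simp [h0]
    rw [Finset.erase_eq_of_notMem this, Finset.cast_card_erase_of_mem hv1mem,
      card_ne hn, if_neg (by simpa using h0)]
    ring
  · have hmem : v0 ∈ ((univ.filter fun v3 : V => v3.1 ≠ v2.1).erase v1) := by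
      simp [Finset.mem_erase, h0, h01]
    rw [Finset.cast_card_erase_of_mem hmem, Finset.cast_card_erase_of_mem hv1mem,
      card_ne hn, if_pos h0]

lemma inner0 (hn : n = ∑ i, a i) (v1 v2 : V) (h12 : v1.1 ≠ v2.1) :
    ∑ v0 : V, (if v0.1 ≠ v1.1 ∧ v0 ≠ v2 then (1:ℤ) else 0) *
      (((n : ℤ) - a v2.1 - 1) - (if v0.1 ≠ v2.1 then 1 else 0))
    = ((n:ℤ) - a v1.1 - 1) * ((n:ℤ) - a v2.1 - 1) - ((n:ℤ) - a v1.1 - a v2.1) := by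
  have expand : ∀ v0 : V, (if v0.1 ≠ v1.1 ∧ v0 ≠ v2 then (1:ℤ) else 0) *
      (((n : ℤ) - a v2.1 - 1) - (if v0.1 ≠ v2.1 then 1 else 0))
      = (if v0.1 ≠ v1.1 ∧ v0 ≠ v2 then (1:ℤ) else 0) * ((n : ℤ) - a v2.1 - 1)
        - (if (v0.1 ≠ v1.1 ∧ v0 ≠ v2) ∧ v0.1 ≠ v2.1 then (1:ℤ) else 0) := by
    intro v0
    by_cases h1 : v0.1 ≠ v1.1 ∧ v0 ≠ v2 <;> by_cases h2 : v0.1 ≠ v2.1 <;>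
      simp [h1, h2] <;> ring
  rw [Finset.sum_congr rfl (fun v0 _ => expand v0), Finset.sum_sub_distrib,
    ← Finset.sum_mul]
  have hA : ∑ v0 : V, (if v0.1 ≠ v1.1 ∧ v0 ≠ v2 then (1:ℤ) else 0)
      = (n:ℤ) - a v1.1 - 1 := by
    rw [Finset.sum_boole]
    have hset : (univ.filter fun v0 : V => v0.1 ≠ v1.1 ∧ v0 ≠ v2)
        = (univ.filter fun v0 : V => v0.1 ≠ v1.1).erase v2 := by
      ext v
      simp only [Finset.mem_filter, Finset.mem_erase, Finset.mem_univ, true_and]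
      tauto
    rw [hset, Finset.cast_card_erase_of_mem (by simp [Ne.symm h12]), card_ne hn]
  have hB : ∑ v0 : V, (if (v0.1 ≠ v1.1 ∧ v0 ≠ v2) ∧ v0.1 ≠ v2.1 then (1:ℤ) else 0)
      = (n:ℤ) - a v1.1 - a v2.1 := by
    rw [Finset.sum_boole]
    have hset : (univ.filter fun v0 : V => (v0.1 ≠ v1.1 ∧ v0 ≠ v2) ∧ v0.1 ≠ v2.1)
        = (univ.filter fun v0 : V => v0.1 ≠ v1.1 ∧ v0.1 ≠ v2.1) := by
      apply Finset.filter_congr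
      intro v _
      constructor
      · rintro ⟨⟨ha2, _⟩, hb⟩; exact ⟨ha2, hb⟩
      · rintro ⟨ha', hb⟩
        exact ⟨⟨ha', fun hh => hb (hh ▸ rfl)⟩, hb⟩
    rw [hset, card_ne2 hn h12]
  rw [hA, hB]

lemma offdiag_sum (t : Fin r → Fin r → ℤ) (hsymm : ∀ i j, t i j = t j i) :
    ∑ i, ∑ j, (if i ≠ j then t i j else 0)
      = 2 * ∑ p ∈ univ.filter (fun p : Fin r × Fin r => p.1 < p.2), t p.1 p.2 := by
  rw [← Fintype.sum_prod_type']
  rw [← Finset.sum_filter]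
  have hsplit : (univ.filter fun p : Fin r × Fin r => p.1 ≠ p.2)
      = (univ.filter fun p : Fin r × Fin r => p.1 < p.2)
        ∪ (univ.filter fun p : Fin r × Fin r => p.2 < p.1) := by
    ext p
    simp only [Finset.mem_filter, Finset.mem_union, Finset.mem_univ, true_and]
    constructor
    · intro h; exact lt_or_gt_of_ne h
    · rintro (h | h)
      · exact h.ne
      · exact h.ne'
  rw [hsplit, Finset.sum_union]
  · have : ∑ p ∈ univ.filter (fun p : Fin r × Fin r => p.2 < p.1), t p.1 p.2
        = ∑ p ∈ univ.filter (fun p : Fin r × Fin r => p.1 < p.2), t p.1 p.2 := by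
      apply Finset.sum_nbij' (fun p => Prod.swap p) (fun p => Prod.swap p)
      · intro p hp; simp at hp ⊢; exact hp
      · intro p hp; simp at hp ⊢; exact hp
      · intro p _; simp
      · intro p _; simp
      · intro p _; exact hsymm p.1 p.2
    rw [this]; ring
  · rw [Finset.disjoint_filter]
    intro p _ h1 h2
    exact absurd h1 (asymm h2)

variable (a) in
def QC (v1 v2 v0 v3 : V) : Prop :=
  v1.1 ≠ v2.1 ∧ (v0.1 ≠ v1.1 ∧ v0 ≠ v2) ∧ (v3.1 ≠ v2.1 ∧ v3 ≠ v1 ∧ v3 ≠ v0)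

lemma goodTuple_iff_QC (f : Fin 4 → V) :
    GoodTuple (completeMultipartiteGraph fun i : Fin r => Fin (a i)) f ↔
      QC a (f 1) (f 2) (f 0) (f 3) := by
  constructor
  · rintro ⟨hinj, hadj⟩
    have hp01 : (pathGraph 4).Adj 0 1 := by rw [pathGraph_adj]; left; rfl
    have hp12 : (pathGraph 4).Adj 1 2 := by rw [pathGraph_adj]; left; rfl
    have hp23 : (pathGraph 4).Adj 2 3 := by rw [pathGraph_adj]; left; rfl
    refine ⟨?_, ⟨?_, ?_⟩, ⟨?_, ?_, ?_⟩⟩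
    · exact hadj 1 2 hp12
    · exact hadj 0 1 hp01
    · exact fun h => absurd (hinj h) (by decide)
    · exact Ne.symm (hadj 2 3 hp23)
    · exact fun h => absurd (hinj h) (by decide)
    · exact fun h => absurd (hinj h) (by decide)
  · rintro ⟨h12, ⟨h01, h02⟩, h32, h31, h30⟩
    have n01 : f 0 ≠ f 1 := fun h => h01 (h ▸ rfl)
    have n12 : f 1 ≠ f 2 := fun h => h12 (h ▸ rfl)
    have n23 : f 2 ≠ f 3 := fun h => h32 (congrArg Sigma.fst h.symm)
    constructor
    · intro i j hij
      by_contra hne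
      fin_cases i <;> fin_cases j <;> simp_all
    · intro i j hij
      rw [pathGraph_adj] at hij
      simp only [comap_adj, top_adj]
      fin_cases i <;> fin_cases j <;> simp_all <;> omega
instance (v1 v2 v0 v3 : V) : Decidable (QC a v1 v2 v0 v3) := by
  unfold QC; infer_instance

lemma level2 (hn : n = ∑ i, a i) (v1 v2 : V) (h12 : v1.1 ≠ v2.1) :
    ∑ v0 : V, (if v0.1 ≠ v1.1 ∧ v0 ≠ v2 then (1:ℤ) else 0) *
      (∑ v3 : V, if v3.1 ≠ v2.1 ∧ v3 ≠ v1 ∧ v3 ≠ v0 then (1:ℤ) else 0)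
    = ((n:ℤ) - a v1.1 - 1) * ((n:ℤ) - a v2.1 - 1) - ((n:ℤ) - a v1.1 - a v2.1) := by
  have key : ∀ v0 : V, (if v0.1 ≠ v1.1 ∧ v0 ≠ v2 then (1:ℤ) else 0) *
      (∑ v3 : V, if v3.1 ≠ v2.1 ∧ v3 ≠ v1 ∧ v3 ≠ v0 then (1:ℤ) else 0)
      = (if v0.1 ≠ v1.1 ∧ v0 ≠ v2 then (1:ℤ) else 0) *
        (((n : ℤ) - a v2.1 - 1) - (if v0.1 ≠ v2.1 then 1 else 0)) := by
    intro v0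
    by_cases h0 : v0.1 ≠ v1.1 ∧ v0 ≠ v2
    · have h01 : v0 ≠ v1 := fun h => h0.1 (h ▸ rfl)
      rw [Finset.sum_boole, inner3 hn v0 v1 v2 h12 h01]
    · simp [h0]
  rw [Finset.sum_congr rfl (fun v0 _ => key v0), inner0 hn v1 v2 h12]

lemma main_count (hn : n = ∑ i, a i) :
    ((univ.filter (fun q : (V) × (V) × (V) × (V) =>
        QC a q.1 q.2.1 q.2.2.1 q.2.2.2)).card : ℤ)
    = 2 * ∑ p ∈ univ.filter (fun p : Fin r × Fin r => p.1 < p.2),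
        (a p.1 : ℤ) * (a p.2 : ℤ) *
          (((a p.1 : ℤ) - 1) * ((a p.2 : ℤ) - 1) +
            ((n : ℤ) - (a p.1 : ℤ) - (a p.2 : ℤ)) * ((n : ℤ) - 3)) := by
  rw [← Finset.sum_boole]
  rw [Fintype.sum_prod_type]
  have hsplit : ∀ v1 v2 v0 v3 : V, (if QC a v1 v2 v0 v3 then (1:ℤ) else 0)
      = (if v1.1 ≠ v2.1 then (1:ℤ) else 0) *
        ((if v0.1 ≠ v1.1 ∧ v0 ≠ v2 then (1:ℤ) else 0) *
          (if v3.1 ≠ v2.1 ∧ v3 ≠ v1 ∧ v3 ≠ v0 then (1:ℤ) else 0)) := by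
    intro v1 v2 v0 v3
    by_cases h1 : v1.1 ≠ v2.1 <;> by_cases h2 : v0.1 ≠ v1.1 ∧ v0 ≠ v2 <;>
      by_cases h3 : v3.1 ≠ v2.1 ∧ v3 ≠ v1 ∧ v3 ≠ v0 <;>
      simp [QC, h1, h2, h3]
  calc ∑ v1 : V, ∑ q : (V) × (V) × (V), (if QC a v1 q.1 q.2.1 q.2.2 then (1:ℤ) else 0)
      = ∑ v1 : V, ∑ v2 : V, (if v1.1 ≠ v2.1 then (1:ℤ) else 0) *
          (∑ v0 : V, (if v0.1 ≠ v1.1 ∧ v0 ≠ v2 then (1:ℤ) else 0) *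
            (∑ v3 : V, if v3.1 ≠ v2.1 ∧ v3 ≠ v1 ∧ v3 ≠ v0 then (1:ℤ) else 0)) := by
        refine Finset.sum_congr rfl fun v1 _ => ?_
        rw [Fintype.sum_prod_type]
        refine Finset.sum_congr rfl fun v2 _ => ?_
        rw [Fintype.sum_prod_type, Finset.mul_sum]
        refine Finset.sum_congr rfl fun v0 _ => ?_
        rw [Finset.mul_sum, Finset.mul_sum]
        exact Finset.sum_congr rfl fun v3 _ => hsplit v1 v2 v0 v3
    _ = ∑ v1 : V, ∑ v2 : V, (if v1.1 ≠ v2.1 then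
          ((n:ℤ) - a v1.1 - 1) * ((n:ℤ) - a v2.1 - 1) - ((n:ℤ) - a v1.1 - a v2.1) else 0) := by
        refine Finset.sum_congr rfl fun v1 _ => Finset.sum_congr rfl fun v2 _ => ?_
        by_cases h12 : v1.1 ≠ v2.1
        · rw [level2 hn v1 v2 h12, if_pos h12, if_pos h12, one_mul]
        · simp [h12]
    _ = ∑ i, (a i : ℤ) * ∑ j, (a j : ℤ) * (if i ≠ j then
          ((n:ℤ) - a i - 1) * ((n:ℤ) - a j - 1) - ((n:ℤ) - a i - a j) else 0) := by
        rw [sum_fst (fun i => ∑ v2 : V, (if i ≠ v2.1 then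
          ((n:ℤ) - a i - 1) * ((n:ℤ) - a v2.1 - 1) - ((n:ℤ) - a i - a v2.1) else 0))]
        refine Finset.sum_congr rfl fun i _ => ?_
        rw [sum_fst (fun j => if i ≠ j then
          ((n:ℤ) - a i - 1) * ((n:ℤ) - a j - 1) - ((n:ℤ) - a i - a j) else 0)]
    _ = ∑ i, ∑ j, (if i ≠ j then
          (a i : ℤ) * (a j : ℤ) *
            (((n:ℤ) - a i - 1) * ((n:ℤ) - a j - 1) - ((n:ℤ) - a i - a j)) else 0) := by
        refine Finset.sum_congr rfl fun i _ => ?_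
        rw [Finset.mul_sum]
        refine Finset.sum_congr rfl fun j _ => ?_
        by_cases hij : i ≠ j <;> simp [hij] <;> ring
    _ = 2 * ∑ p ∈ univ.filter (fun p : Fin r × Fin r => p.1 < p.2),
          (a p.1 : ℤ) * (a p.2 : ℤ) *
            (((n:ℤ) - a p.1 - 1) * ((n:ℤ) - a p.2 - 1) - ((n:ℤ) - a p.1 - a p.2)) := by
        exact offdiag_sum _ (fun i j => by ring)
    _ = _ := by
        congr 1
        exact Finset.sum_congr rfl fun p _ => by ring

end PartB

theorem P3_count_completeMultipartite (r : ℕ) (a : Fin r → ℕ) (n : ℕ)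
    (hn : n = ∑ i, a i) :
    (subgraphCount P3 (completeMultipartiteGraph (fun i : Fin r => Fin (a i))) : ℤ) =
      ∑ p ∈ Finset.univ.filter (fun p : Fin r × Fin r => p.1 < p.2),
        (a p.1 : ℤ) * (a p.2 : ℤ) *
          (((a p.1 : ℤ) - 1) * ((a p.2 : ℤ) - 1) +
            ((n : ℤ) - (a p.1 : ℤ) - (a p.2 : ℤ)) * ((n : ℤ) - 3)) := by
  classical
  set G := completeMultipartiteGraph (fun i : Fin r => Fin (a i)) with hG
  have h2 : Nat.card {f : Fin 4 → (Σ i : Fin r, Fin (a i)) // GoodTuple G f}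
      = 2 * subgraphCount P3 G := natCard_goodTuple_eq G
  let E : {f : Fin 4 → (Σ i : Fin r, Fin (a i)) // GoodTuple G f} ≃
      {q : (Σ i : Fin r, Fin (a i)) × (Σ i : Fin r, Fin (a i)) × (Σ i : Fin r, Fin (a i)) ×
        (Σ i : Fin r, Fin (a i)) // QC a q.1 q.2.1 q.2.2.1 q.2.2.2} :=
    { toFun := fun f => ⟨(f.1 1, f.1 2, f.1 0, f.1 3), (goodTuple_iff_QC f.1).mp f.2⟩
      invFun := fun q => ⟨![q.1.2.2.1, q.1.1, q.1.2.1, q.1.2.2.2],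
        (goodTuple_iff_QC _).mpr q.2⟩
      left_inv := fun f => Subtype.ext (by funext i; fin_cases i <;> rfl)
      right_inv := fun q => rfl }
  have h3 : Nat.card {f : Fin 4 → (Σ i : Fin r, Fin (a i)) // GoodTuple G f}
      = (univ.filter (fun q : (Σ i : Fin r, Fin (a i)) × (Σ i : Fin r, Fin (a i)) ×
          (Σ i : Fin r, Fin (a i)) × (Σ i : Fin r, Fin (a i)) =>
            QC a q.1 q.2.1 q.2.2.1 q.2.2.2)).card := by
    rw [Nat.card_congr E, Nat.card_eq_fintype_card, Fintype.card_subtype]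
  have h4 := main_count (a := a) hn
  rw [h3] at h2
  have h5 : 2 * (subgraphCount P3 G : ℤ)
      = 2 * ∑ p ∈ Finset.univ.filter (fun p : Fin r × Fin r => p.1 < p.2),
        (a p.1 : ℤ) * (a p.2 : ℤ) *
          (((a p.1 : ℤ) - 1) * ((a p.2 : ℤ) - 1) +
            ((n : ℤ) - (a p.1 : ℤ) - (a p.2 : ℤ)) * ((n : ℤ) - 3)) := by
    rw [← h4, h2]
    push_cast
    ring
  linarith
end
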